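/- arXiv:2008.03137 — 5 statements merged into one kernel-verified Lean document; each statement's English description precedes it below -/
import Mathlib

section
/- (One-vertex electric-network reduction does not decrease the random walk spectral gap.) Let V be a finite set with |V| ≥ 3, let c : V × V → ℝ be a symmetric nonnegative edge-weight function with zero diagonal, and let i ∈ V be a vertex with Σ_{ℓ∈V} c(i,ℓ) > 0. Define new weights c' on V ∖ {i} by c'(j,k) = c(j,k) + c(i,j)·c(i,k)/(Σ_{ℓ∈V} c(i,ℓ)) for j ≠ k in V ∖ {i}, and c'(j,j) = 0. Then λ_RW(c') ≥ λ_RW(c), where λ_RW(c') is the random walk spectral gap on the vertex set V ∖ {i} with weights c'. -/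
/-!
Given `ψ` on `V ∖ {i}`, extend it to `φ` on `V` by the value at `i` that makes `φ` harmonic
there, the `c(i,·)`-weighted mean `t` of `ψ`. For this value the star of edges at `i` carries
energy `Σ_k c(i,k) (t - ψ k)² = (Σ_{j,k} c(i,j) c(i,k) (ψ j - ψ k)²) / (2 Σ_ℓ c(i,ℓ))`, which is
exactly what the mesh `c' - c` adds, so `Σ c (φ j - φ k)² = Σ c' (ψ j - ψ k)²`. On the other hand
`n Var φ = min_b Σ_V (φ - b)² ≥ min_b Σ_{V ∖ {i}} (ψ - b)² = (n - 1) Var ψ`. Since the Dirichlet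
forms are normalised by `1/(2n)` and `1/(2(n-1))`, any `λ` with `λ Var ≤ E` for `c` also works
for `c'`; `|V| ≥ 3` makes the gap of `c'` a genuine supremum rather than the junk `sSup` of an
unbounded set.
-/

open Finset

/-- Variance of `φ : V → ℝ` under the uniform probability measure on the finite set `V`. -/
noncomputable def uniformVar {V : Type*} [Fintype V] (φ : V → ℝ) : ℝ :=
  (∑ j, φ j ^ 2) / (Fintype.card V : ℝ) - ((∑ j, φ j) / (Fintype.card V : ℝ)) ^ 2

/-- Dirichlet form of the single-particle random walk with edge weights `c`. -/
noncomputable def rwDirichlet {V : Type*} [Fintype V] (c : V → V → ℝ) (φ : V → ℝ) : ℝ :=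
  (1 / (2 * (Fintype.card V : ℝ))) * ∑ j, ∑ k, c j k * (φ j - φ k) ^ 2

/-- Spectral gap of the single-particle random walk with edge weights `c`. -/
noncomputable def lambdaRW {V : Type*} [Fintype V] (c : V → V → ℝ) : ℝ :=
  sSup {l : ℝ | 0 ≤ l ∧ ∀ φ : V → ℝ, l * uniformVar φ ≤ rwDirichlet c φ}

section SumsOfSquares

variable {X : Type*} [Fintype X]

theorem sum_mul_sq_sub (a f : X → ℝ) (t : ℝ) :
    ∑ x, a x * (t - f x) ^ 2
      = (∑ x, a x) * t ^ 2 - 2 * t * ∑ x, a x * f x + ∑ x, a x * f x ^ 2 := by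
  simp only [sum_mul, mul_sum, ← sum_sub_distrib, ← sum_add_distrib]
  exact sum_congr rfl fun x _ => by ring

theorem sum_sum_mul_mul_sq_sub (a f : X → ℝ) :
    ∑ j, ∑ k, a j * a k * (f j - f k) ^ 2
      = 2 * (∑ j, a j) * ∑ j, a j * f j ^ 2 - 2 * (∑ j, a j * f j) ^ 2 := by
  have h : ∀ j k, a j * a k * (f j - f k) ^ 2
      = a j * f j ^ 2 * a k + a j * (a k * f k ^ 2) - 2 * (a j * f j * (a k * f k)) :=
    fun j k => by ring
  simp only [h, sum_sub_distrib, sum_add_distrib, ← mul_sum, ← sum_mul]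
  ring

theorem two_mul_sum_mul_sq_weightedMean_sub (a f : X → ℝ) (ha : ∑ x, a x ≠ 0) :
    2 * ∑ x, a x * ((∑ y, a y * f y) / ∑ y, a y - f x) ^ 2
      = (∑ j, ∑ k, a j * a k * (f j - f k) ^ 2) / ∑ y, a y := by
  rw [sum_mul_sq_sub, sum_sum_mul_mul_sq_sub]
  field_simp
  ring

theorem sum_sq_sub_eq_card_mul_uniformVar_add [Nonempty X] (f : X → ℝ) (b : ℝ) :
    ∑ x, (f x - b) ^ 2
      = Fintype.card X * uniformVar f
        + Fintype.card X * ((∑ x, f x) / Fintype.card X - b) ^ 2 := by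
  have hX : (Fintype.card X : ℝ) ≠ 0 := by positivity
  have h := sum_mul_sq_sub (fun _ => 1) f b
  simp only [one_mul, sum_const, card_univ, nsmul_eq_mul, mul_one] at h
  simp only [sub_sq_comm (f _) b, h, uniformVar]
  field_simp
  ring

theorem card_mul_uniformVar_le_sum_sq_sub [Nonempty X] (f : X → ℝ) (b : ℝ) :
    Fintype.card X * uniformVar f ≤ ∑ x, (f x - b) ^ 2 := by
  rw [sum_sq_sub_eq_card_mul_uniformVar_add f b]
  have := sq_nonneg ((∑ x, f x) / Fintype.card X - b)
  have : (0 : ℝ) ≤ Fintype.card X := by positivity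
  nlinarith

theorem card_mul_uniformVar_subtype_le (p : X → Prop) [DecidablePred p] [Nonempty {x // p x}]
    (f : X → ℝ) :
    Fintype.card {x // p x} * uniformVar (fun x : {x // p x} => f x)
      ≤ Fintype.card X * uniformVar f := by
  have : Nonempty X := ‹Nonempty {x // p x}›.map Subtype.val
  set m := (∑ x, f x) / Fintype.card X
  calc Fintype.card {x // p x} * uniformVar (fun x : {x // p x} => f x)
      ≤ ∑ x : {x // p x}, (f x - m) ^ 2 := card_mul_uniformVar_le_sum_sq_sub _ m
    _ ≤ ∑ x : {x // p x}, (f x - m) ^ 2 + ∑ x : {x // ¬p x}, (f x - m) ^ 2 :=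
        le_add_of_nonneg_right (sum_nonneg fun _ _ => sq_nonneg _)
    _ = Fintype.card X * uniformVar f := by
        rw [Fintype.sum_subtype_add_sum_subtype p (fun x => (f x - m) ^ 2),
          sum_sq_sub_eq_card_mul_uniformVar_add, sub_self, sq, mul_zero, mul_zero, add_zero]

end SumsOfSquares

section SpectralGap

variable {X : Type*} [Fintype X]

theorem rwDirichlet_nonneg {c : X → X → ℝ} (hc : ∀ j k, 0 ≤ c j k) (φ : X → ℝ) :
    0 ≤ rwDirichlet c φ :=
  mul_nonneg (by positivity) <|
    sum_nonneg fun j _ => sum_nonneg fun k _ => mul_nonneg (hc j k) (sq_nonneg _)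

theorem card_mul_rwDirichlet [Nonempty X] (c : X → X → ℝ) (φ : X → ℝ) :
    Fintype.card X * rwDirichlet c φ = (∑ j, ∑ k, c j k * (φ j - φ k) ^ 2) / 2 := by
  have hX : (Fintype.card X : ℝ) ≠ 0 := by positivity
  rw [rwDirichlet]
  field_simp

theorem exists_uniformVar_pos (hX : 1 < Fintype.card X) : ∃ ψ : X → ℝ, 0 < uniformVar ψ := by
  classical
  obtain ⟨x⟩ : Nonempty X := Fintype.card_pos_iff.mp (by omega)
  refine ⟨Pi.single x 1, ?_⟩
  have hn : (1 : ℝ) < Fintype.card X := by exact_mod_cast hX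
  have h1 : ∑ y, (Pi.single x 1 : X → ℝ) y = 1 := by simp
  have h2 : ∑ y, (Pi.single x 1 : X → ℝ) y ^ 2 = 1 := by
    simp [Pi.single_apply, ite_pow]
  rw [uniformVar, h1, h2, div_pow, one_pow, sub_pos, one_div_lt_one_div (by positivity) (by positivity)]
  nlinarith

theorem bddAbove_of_uniformVar_pos (c : X → X → ℝ) {ψ : X → ℝ} (hψ : 0 < uniformVar ψ) :
    BddAbove {l : ℝ | 0 ≤ l ∧ ∀ φ : X → ℝ, l * uniformVar φ ≤ rwDirichlet c φ} :=
  ⟨rwDirichlet c ψ / uniformVar ψ, fun _ hl => (le_div_iff₀ hψ).2 (hl.2 ψ)⟩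

theorem lambdaRW_le_lambdaRW_of_comparison {V W : Type*} [Fintype V] [Fintype W]
    {c : V → V → ℝ} {c' : W → W → ℝ} (hc : ∀ j k, 0 ≤ c j k) (hW : 1 < Fintype.card W)
    (hcomp : ∀ ψ : W → ℝ, ∃ φ : V → ℝ,
      Fintype.card W * uniformVar ψ ≤ Fintype.card V * uniformVar φ ∧
      Fintype.card W * rwDirichlet c' ψ = Fintype.card V * rwDirichlet c φ) :
    lambdaRW c ≤ lambdaRW c' := by
  obtain ⟨ψ₀, hψ₀⟩ := exists_uniformVar_pos hW
  refine csSup_le_csSup (bddAbove_of_uniformVar_pos c' hψ₀)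
    ⟨0, le_rfl, fun φ => (zero_mul _).trans_le (rwDirichlet_nonneg hc φ)⟩ ?_
  rintro l ⟨hl, hlc⟩
  refine ⟨hl, fun ψ => ?_⟩
  obtain ⟨φ, hvar, hdir⟩ := hcomp ψ
  have hWpos : (0 : ℝ) < Fintype.card W := by norm_cast; omega
  refine le_of_mul_le_mul_left ?_ hWpos
  calc Fintype.card W * (l * uniformVar ψ) = l * (Fintype.card W * uniformVar ψ) := by ring
    _ ≤ l * (Fintype.card V * uniformVar φ) := mul_le_mul_of_nonneg_left hvar hl
    _ = Fintype.card V * (l * uniformVar φ) := by ring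
    _ ≤ Fintype.card V * rwDirichlet c φ := mul_le_mul_of_nonneg_left (hlc φ) (by positivity)
    _ = Fintype.card W * rwDirichlet c' ψ := hdir.symm

end SpectralGap

section StarMesh

variable {V : Type*} [Fintype V] [DecidableEq V]

theorem sum_eq_sum_subtype_ne_of_eq_zero {M : Type*} [AddCommMonoid M] {f : V → M} {i : V}
    (hi : f i = 0) : ∑ v, f v = ∑ v : {v // v ≠ i}, f v := by
  rw [Fintype.sum_eq_add_sum_subtype_ne f i, hi, zero_add]

theorem sum_sum_eq_two_nsmul_sum_add_sum_sum_subtype_ne {M : Type*} [AddCommMonoid M]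
    {F : V → V → M} (hF : ∀ j k, F j k = F k j) (i : V) (hFi : F i i = 0) :
    ∑ j, ∑ k, F j k
      = 2 • ∑ k : {v // v ≠ i}, F i k + ∑ j : {v // v ≠ i}, ∑ k : {v // v ≠ i}, F j k := by
  simp only [Fintype.sum_eq_add_sum_subtype_ne _ i, hFi, zero_add, sum_add_distrib, hF _ i,
    two_nsmul, add_assoc]

theorem sum_sum_mul_sq_eq_sum_sum_starMesh {c : V → V → ℝ} (hsymm : ∀ j k, c j k = c k j)
    (i : V) (hii : c i i = 0) (hs : ∑ l, c i l ≠ 0) {φ : V → ℝ}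
    (hφ : φ i = (∑ l, c i l * φ l) / ∑ l, c i l) :
    ∑ j, ∑ k, c j k * (φ j - φ k) ^ 2
      = ∑ j : {v // v ≠ i}, ∑ k : {v // v ≠ i},
          (c j k + c i j * c i k / ∑ l, c i l) * (φ j - φ k) ^ 2 := by
  have hstar := two_mul_sum_mul_sq_weightedMean_sub (fun k : {v // v ≠ i} => c i k)
    (fun k => φ k) (by rwa [← sum_eq_sum_subtype_ne_of_eq_zero hii])
  rw [← sum_eq_sum_subtype_ne_of_eq_zero hii,
    ← sum_eq_sum_subtype_ne_of_eq_zero (f := fun l => c i l * φ l) (by simp [hii]), ← hφ]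
    at hstar
  rw [sum_sum_eq_two_nsmul_sum_add_sum_sum_subtype_ne (fun j k => by rw [hsymm, sub_sq_comm]) i
    (by simp), nsmul_eq_mul, Nat.cast_ofNat, hstar, sum_div]
  simp only [add_mul, sum_add_distrib, sum_div, div_mul_eq_mul_div]
  exact add_comm _ _

end StarMesh

/-- **One-vertex electric-network reduction does not decrease the random walk spectral
gap.** Removing a vertex `i` (with positive total conductance) and redistributing its
edge weights by `c'(j,k) = c(j,k) + c(i,j)c(i,k)/Σ_ℓ c(i,ℓ)` yields a weighted graph on
`V ∖ {i}` whose random walk spectral gap is at least that of the original one. -/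
theorem lambdaRW_reduction {V : Type*} [Fintype V] [DecidableEq V]
    (hcard : 3 ≤ Fintype.card V) (c : V → V → ℝ)
    (hsymm : ∀ j k, c j k = c k j) (hnonneg : ∀ j k, 0 ≤ c j k)
    (hdiag : ∀ j, c j j = 0) (i : V) (hpos : 0 < ∑ l, c i l) :
    lambdaRW c ≤
      lambdaRW (fun j k : {v : V // v ≠ i} =>
        if (j : V) = (k : V) then 0
        else c (j : V) (k : V) + c i (j : V) * c i (k : V) / ∑ l, c i l) := by
  have hcardW : Fintype.card {v : V // v ≠ i} = Fintype.card V - 1 := by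
    simp [Fintype.card_subtype_compl]
  have : Nonempty V := ⟨i⟩
  have : Nonempty {v : V // v ≠ i} := Fintype.card_pos_iff.mp (by omega)
  refine lambdaRW_le_lambdaRW_of_comparison hnonneg (by omega) fun ψ => ?_
  let φ : V → ℝ := fun v =>
    if h : v = i then (∑ l : {v // v ≠ i}, c i l * ψ l) / ∑ l, c i l else ψ ⟨v, h⟩
  have hφψ : ∀ v : {v // v ≠ i}, φ v = ψ v := fun v => dif_neg v.2
  have hφ : φ i = (∑ l, c i l * φ l) / ∑ l, c i l := by
    rw [sum_eq_sum_subtype_ne_of_eq_zero (f := fun l => c i l * φ l) (i := i) (by simp [hdiag])]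
    simp only [hφψ]
    exact dif_pos rfl
  refine ⟨φ, by simpa only [hφψ] using card_mul_uniformVar_subtype_le (· ≠ i) φ, ?_⟩
  rw [card_mul_rwDirichlet, card_mul_rwDirichlet,
    sum_sum_mul_sq_eq_sum_sum_starMesh hsymm i (hdiag i) hpos.ne' hφ]
  congr 1
  refine sum_congr rfl fun j _ => sum_congr rfl fun k _ => ?_
  split_ifs with hjk
  · simp [hjk]
  · simp only [hφψ]
end

section
/- (Holroyd–Liggett.) There exists a stationary 1-dependent 4-coloring of ℤ, i.e., a probability measure μ on ℤ → Fin 4 that is stationary, 1-dependent, and a 4-coloring. -/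
open MeasureTheory ProbabilityTheory

/-- Configurations: colorings of `ℤ` with `q` colors, with the product σ-algebra. -/
abbrev Config (q : ℕ) : Type := ℤ → Fin q

/-- The left shift on configurations: `shift x n = x (n + 1)`. -/
def shift {q : ℕ} (x : Config q) : Config q := fun n => x (n + 1)

/-- A measure on configurations is stationary if it is invariant under the shift. -/
def IsStationary' {q : ℕ} (μ : Measure (Config q)) : Prop :=
  μ.map shift = μ

/-- A measure on configurations is a (proper) `q`-coloring if almost surely adjacent
coordinates take different values. -/
def IsColoring {q : ℕ} (μ : Measure (Config q)) : Prop :=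
  ∀ᵐ x ∂μ, ∀ n : ℤ, x n ≠ x (n + 1)

/-- The σ-algebra on configurations generated by the coordinates in `A ⊆ ℤ`. -/
def coordSigma (q : ℕ) (A : Set ℤ) : MeasurableSpace (Config q) :=
  ⨆ a ∈ A, MeasurableSpace.comap (fun x : Config q => x a) inferInstance

/-- A measure on configurations is `k`-dependent if the σ-algebras generated by the
coordinates in any two sets `A, B ⊆ ℤ` with `|a - b| > k` for all `a ∈ A`, `b ∈ B`
are independent. -/
def KDependent {q : ℕ} (k : ℕ) (μ : Measure (Config q)) : Prop :=
  ∀ A B : Set ℤ, (∀ a ∈ A, ∀ b ∈ B, (k : ℤ) < |a - b|) →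
    Indep (coordSigma q A) (coordSigma q B) μ

/-!
The Holroyd–Liggett coloring gives a word `w` of length `n` the weight
`P(w) = N(w) / (2ⁿ (n + 1)!)`, where `N(w)` is the number of ways to build `w` from the empty
word by inserting letters one at a time so that every intermediate word is proper. With four
colors, `N` satisfies `∑_c N(u c v) = 2 N(u) N(v) C(|u| + |v| + 2, |u| + 1)`, that is
`∑_c P(u c v) = P(u) P(v)`. Taking `u` or `v` empty gives the consistency of the weights, so they
are the window marginals of a probability measure on `ℤ → Fin 4` (sampled from one uniform point
of `[0, 1)`, revealing the sites in the order `0, -1, 1, -2, 2, …`); it is stationary because the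
weights do not depend on the position of the window. In general the identity makes windows
separated by one site independent, and two finite sets of sites at distance at least two can be
cut into pieces lying on either side of such gaps, which gives 1-dependence. Finally
`P(c c) = 0`, so the measure is a proper coloring.
-/

theorem Finset.sum_range_eraseIdx_append_cons {α M : Type*} [AddCommMonoid M]
    (f : List α → M) (u v : List α) (c : α) :
    ∑ i ∈ range (u ++ c :: v).length, f ((u ++ c :: v).eraseIdx i) =
      ∑ i ∈ range u.length, f (u.eraseIdx i ++ c :: v) + f (u ++ v) +
        ∑ j ∈ range v.length, f (u ++ c :: v.eraseIdx j) := by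
  have hlen : (u ++ c :: v).length = u.length + (v.length + 1) := by simp
  rw [hlen, sum_range_add, sum_range_succ', add_assoc]
  congr 1
  · exact sum_congr rfl fun i hi =>
      by rw [List.eraseIdx_append_of_lt_length (mem_range.mp hi)]
  · rw [add_comm]
    congr 1
    · rw [add_zero, List.eraseIdx_append_of_length_le le_rfl, Nat.sub_self,
        List.eraseIdx_cons_zero]
    · exact sum_congr rfl fun j _ => by
        rw [List.eraseIdx_append_of_length_le (by omega),
          show u.length + (j + 1) - u.length = j + 1 by omega, List.eraseIdx_cons_succ]

namespace HolroydLiggett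

open Finset

variable {α : Type*} [DecidableEq α]

/-- The number of ways to build `w` from the empty word by inserting one letter at a time so
that every intermediate word is a proper coloring. -/
def buildCount (w : List α) : ℕ :=
  if w = [] then 1
  else if w.IsChain (· ≠ ·) then ∑ i : Fin w.length, buildCount (w.eraseIdx i) else 0
termination_by w.length
decreasing_by
  have := i.isLt
  rw [List.length_eraseIdx, if_pos i.isLt]
  omega

def deletionSum (w : List α) : ℕ := ∑ i ∈ range w.length, buildCount (w.eraseIdx i)

@[simp]
theorem buildCount_nil : buildCount ([] : List α) = 1 := by
  rw [buildCount, if_pos rfl]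

theorem buildCount_of_not_isChain {w : List α} (h : ¬ w.IsChain (· ≠ ·)) :
    buildCount w = 0 := by
  have hne : w ≠ [] := by rintro rfl; exact h List.isChain_nil
  rw [buildCount, if_neg hne, if_neg h]

theorem buildCount_eq_deletionSum {w : List α} (hne : w ≠ []) (h : w.IsChain (· ≠ ·)) :
    buildCount w = deletionSum w := by
  rw [buildCount, if_neg hne, if_pos h, deletionSum,
    Fin.sum_univ_eq_sum_range (fun i => buildCount (w.eraseIdx i))]

theorem deletionSum_eq_ite {w : List α} (h : w.IsChain (· ≠ ·)) :
    deletionSum w = if w = [] then 0 else buildCount w := by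
  split_ifs with hw
  · simp [hw, deletionSum]
  · exact (buildCount_eq_deletionSum hw h).symm

theorem buildCount_append_cons_cons_self (x y : List α) (c : α) :
    buildCount (x ++ c :: c :: y) = 0 :=
  buildCount_of_not_isChain fun h =>
    (List.isChain_cons_cons.mp (List.isChain_append.mp h).2.1).1 rfl

theorem deletionSum_append_cons_cons_self (x y : List α) (c : α) :
    deletionSum (x ++ c :: c :: y) = 2 * buildCount (x ++ c :: y) := by
  rw [deletionSum, Finset.sum_range_eraseIdx_append_cons, List.length_cons, sum_range_succ']
  simp only [List.eraseIdx_cons_succ, List.eraseIdx_cons_zero, buildCount_append_cons_cons_self,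
    sum_const_zero]
  ring

/-- If `c` repeats a neighbour, `u ++ c :: v` is improper, but deleting either copy of the
repeated letter gives `u ++ v`. -/
theorem deletionSum_append_cons {u v : List α} (hu : u.IsChain (· ≠ ·))
    (hv : v.IsChain (· ≠ ·)) (c : α) :
    deletionSum (u ++ c :: v) = buildCount (u ++ c :: v) + 2 * buildCount (u ++ v) *
      ((if u.getLast? = some c then 1 else 0) + (if v.head? = some c then 1 else 0)) := by
  by_cases hl : u.getLast? = some c
  · obtain ⟨u', rfl⟩ := List.getLast?_eq_some_iff.mp hl
    simp only [List.append_assoc, List.singleton_append, deletionSum_append_cons_cons_self,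
      buildCount_append_cons_cons_self, if_pos hl, zero_add]
    split_ifs with hh
    · obtain ⟨v', rfl⟩ : ∃ v', v = c :: v' := by
        cases v <;> simp_all
      simp [buildCount_append_cons_cons_self]
    · ring
  by_cases hh : v.head? = some c
  · obtain ⟨v', rfl⟩ : ∃ v', v = c :: v' := by cases v <;> simp_all
    simp [deletionSum_append_cons_cons_self, buildCount_append_cons_cons_self, hl]
  have hproper : (u ++ c :: v).IsChain (· ≠ ·) := by
    refine List.isChain_append.mpr ⟨hu, ?_, fun a ha b hb => ?_⟩
    · cases v with
      | nil => exact List.isChain_singleton c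
      | cons b v => exact List.isChain_cons_cons.mpr ⟨fun h => hh (by simp [h]), hv⟩
    · simp only [List.head?_cons, Option.mem_def, Option.some.injEq] at hb
      rintro rfl
      exact hl (hb ▸ ha)
  simp [buildCount_eq_deletionSum (by simp) hproper, hl, hh]

theorem sum_deletionSum_append_cons [Fintype α] {u v : List α} (hu : u.IsChain (· ≠ ·))
    (hv : v.IsChain (· ≠ ·)) :
    ∑ c, deletionSum (u ++ c :: v) = ∑ c, buildCount (u ++ c :: v) +
      2 * buildCount (u ++ v) * ((if u = [] then 0 else 1) + (if v = [] then 0 else 1)) := by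
  have hcount : ∀ o : Option α,
      ∑ c, (if o = some c then 1 else 0) = if o = none then 0 else 1 := by
    rintro (_ | a) <;> simp
  simp only [deletionSum_append_cons hu hv, sum_add_distrib, ← mul_sum, hcount,
    List.getLast?_eq_none_iff, List.head?_eq_none_iff]

theorem buildCount_append_cons_of_not_isChain {u v : List α}
    (h : ¬ (u.IsChain (· ≠ ·) ∧ v.IsChain (· ≠ ·))) (c : α) : buildCount (u ++ c :: v) = 0 :=
  buildCount_of_not_isChain fun huv => h
    ⟨(List.isChain_append.mp huv).1, (List.isChain_append.mp huv).2.1.tail⟩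

theorem sum_buildCount_insert [Fintype α] (hα : Fintype.card α = 4) (u v : List α) :
    ∑ c, buildCount (u ++ c :: v) =
      2 * buildCount u * buildCount v * (u.length + v.length + 2).choose (u.length + 1) := by
  induction hn : u.length + v.length using Nat.strong_induction_on generalizing u v with
  | _ n ih =>
  subst hn
  by_cases hproper : u.IsChain (· ≠ ·) ∧ v.IsChain (· ≠ ·)
  swap
  · rcases not_and_or.mp hproper with h | h <;>
      simp [buildCount_append_cons_of_not_isChain hproper, buildCount_of_not_isChain h]
  obtain ⟨hu, hv⟩ := hproper
  have hleft : ∑ i ∈ range u.length, ∑ c, buildCount (u.eraseIdx i ++ c :: v) =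
      2 * deletionSum u * buildCount v * (u.length + v.length + 1).choose u.length := by
    simp only [deletionSum, mul_sum, sum_mul]
    refine sum_congr rfl fun i hi => ?_
    have hlen : (u.eraseIdx i).length + 1 = u.length := by
      rw [List.length_eraseIdx_of_lt (mem_range.mp hi)]; have := mem_range.mp hi; omega
    rw [ih _ (by omega) _ _ rfl, ← hlen]
    ring_nf
  have hright : ∑ j ∈ range v.length, ∑ c, buildCount (u ++ c :: v.eraseIdx j) =
      2 * buildCount u * deletionSum v * (u.length + v.length + 1).choose (u.length + 1) := by
    simp only [deletionSum, mul_sum, sum_mul]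
    refine sum_congr rfl fun j hj => ?_
    have hlen : (v.eraseIdx j).length + 1 = v.length := by
      rw [List.length_eraseIdx_of_lt (mem_range.mp hj)]; have := mem_range.mp hj; omega
    rw [ih _ (by omega) _ _ rfl, ← hlen]
    ring_nf
  -- Deleting the inserted letter contributes `4 N(u v)`, which the clashes of `c` with the two
  -- neighbours compensate: this is where four colors are needed.
  have hdel := sum_deletionSum_append_cons (α := α) hu hv
  simp only [deletionSum, Finset.sum_range_eraseIdx_append_cons, sum_add_distrib, sum_const,
    card_univ, hα, smul_eq_mul] at hdel
  rw [sum_comm, hleft, sum_comm, hright, deletionSum_eq_ite hu, deletionSum_eq_ite hv] at hdel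
  rcases eq_or_ne u [] with rfl | hu0 <;> rcases eq_or_ne v [] with rfl | hv0
  · simpa using hdel.symm
  · simp [hv0] at hdel ⊢
    linarith
  · simp [hu0] at hdel ⊢
    linarith
  · simp only [if_neg hu0, if_neg hv0] at hdel
    rw [show u.length + v.length + 2 = u.length + v.length + 1 + 1 by ring, Nat.choose_succ_succ]
    nlinarith

noncomputable def weight (w : List α) : ℝ :=
  buildCount w / (2 ^ w.length * (w.length + 1).factorial)

theorem weight_nonneg (w : List α) : 0 ≤ weight w := by
  unfold weight; positivity

@[simp]
theorem weight_nil : weight ([] : List α) = 1 := by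
  simp [weight]

theorem weight_pair_self (c : α) : weight [c, c] = 0 := by
  simp [weight, buildCount_of_not_isChain]

theorem sum_weight_insert [Fintype α] (hα : Fintype.card α = 4) (u v : List α) :
    ∑ c, weight (u ++ c :: v) = weight u * weight v := by
  have hlen : ∀ c : α, (u ++ c :: v).length = u.length + v.length + 1 := fun c => by simp; omega
  have hcount : (∑ c, buildCount (u ++ c :: v) : ℝ) = 2 * buildCount u * buildCount v *
      (u.length + v.length + 2).choose (u.length + 1) := by
    exact_mod_cast sum_buildCount_insert hα u v
  have hchoose : ((u.length + v.length + 2).choose (u.length + 1) : ℝ) *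
      (v.length + 1).factorial * (u.length + 1).factorial =
        (u.length + v.length + 2).factorial := by
    have := Nat.add_choose_mul_factorial_mul_factorial (v.length + 1) (u.length + 1)
    rw [show v.length + 1 + (u.length + 1) = u.length + v.length + 2 by omega] at this
    exact_mod_cast this
  simp only [weight, hlen, ← sum_div]
  rw [div_mul_div_comm, div_eq_div_iff (by positivity) (by positivity), hcount,
    show u.length + v.length + 1 + 1 = u.length + v.length + 2 by omega, ← hchoose]
  ring

theorem sum_weight_cons [Fintype α] (hα : Fintype.card α = 4) (w : List α) :
    ∑ c, weight (c :: w) = weight w := by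
  simpa using sum_weight_insert hα [] w

theorem sum_weight_append_singleton [Fintype α] (hα : Fintype.card α = 4) (w : List α) :
    ∑ c, weight (w ++ [c]) = weight w := by
  simpa using sum_weight_insert hα w []

end HolroydLiggett

section Window

open Set

variable {α : Type*}

def window (s : ℤ) (w : List α) : Set (ℤ → α) :=
  {x | ∀ (i : ℕ) (hi : i < w.length), x (s + i) = w[i]}

@[simp]
theorem window_nil (s : ℤ) : window s ([] : List α) = univ := by
  simp [window]

theorem window_append (s : ℤ) (u v : List α) :
    window s (u ++ v) = window s u ∩ window (s + u.length) v := by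
  ext x
  simp only [window, mem_ofPred_eq, mem_inter_iff, List.length_append]
  constructor
  · intro h
    refine ⟨fun i hi => by simpa [List.getElem_append_left hi] using h i (by omega),
      fun j hj => ?_⟩
    have := h (u.length + j) (by omega)
    rw [List.getElem_append_right (by omega)] at this
    simpa [add_assoc] using this
  · rintro ⟨hu, hv⟩ i hi
    rcases lt_or_ge i u.length with hiu | hiu
    · rw [List.getElem_append_left hiu]; exact hu i hiu
    · obtain ⟨j, rfl⟩ := Nat.exists_eq_add_of_le hiu
      rw [List.getElem_append_right (by omega)]
      simpa [add_assoc] using hv j (by omega)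

@[simp]
theorem window_singleton (s : ℤ) (c : α) : window s [c] = {x | x s = c} := by
  simp [window]

theorem window_cons (s : ℤ) (c : α) (w : List α) :
    window s (c :: w) = {x | x s = c} ∩ window (s + 1) w := by
  simpa using window_append s [c] w

theorem window_append_singleton (s : ℤ) (w : List α) (c : α) :
    window s (w ++ [c]) = window s w ∩ {x | x (s + w.length) = c} := by
  simp [window_append]

theorem mem_window_ofFn {s : ℤ} {n : ℕ} {f : Fin n → α} {x : ℤ → α} :
    x ∈ window s (List.ofFn f) ↔ ∀ i : Fin n, x (s + i) = f i := by
  simp only [window, mem_ofPred_eq, List.length_ofFn, List.getElem_ofFn]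
  exact ⟨fun h i => h i i.isLt, fun h i hi => h ⟨i, hi⟩⟩

theorem eq_of_mem_window {s : ℤ} {w : List α} {x y : ℤ → α} (hx : x ∈ window s w)
    (hy : y ∈ window s w) {i : ℤ} (hi : i ∈ Ico s (s + w.length)) : x i = y i := by
  obtain ⟨j, rfl⟩ : ∃ j : ℕ, i = s + j := ⟨(i - s).toNat, by simp at hi; omega⟩
  have hj : j < w.length := by simp at hi; omega
  rw [hx j hj, hy j hj]

theorem window_subset_or_disjoint {s : ℤ} {w : List α} {A : Set (ℤ → α)}
    (hA : DependsOn (· ∈ A) (Ico s (s + w.length))) :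
    window s w ⊆ A ∨ Disjoint (window s w) A := by
  by_cases h : ∃ x ∈ window s w, x ∈ A
  · obtain ⟨x, hxw, hxA⟩ := h
    exact Or.inl fun y hyw => (hA fun i hi => eq_of_mem_window hxw hyw hi).mp hxA
  · exact Or.inr (disjoint_left.mpr fun x hxw hxA => h ⟨x, hxw, hxA⟩)

theorem preimage_shift_window {q : ℕ} (s : ℤ) (w : List (Fin q)) :
    shift ⁻¹' window s w = window (s + 1) w := by
  ext x
  simp [window, shift, add_right_comm]

theorem exists_Ico_superset (S : Finset ℤ) :
    ∃ (s : ℤ) (n : ℕ), (S : Set ℤ) ⊆ Ico s (s + n) := by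
  obtain ⟨a, ha⟩ := S.bddBelow
  obtain ⟨b, hb⟩ := S.bddAbove
  exact ⟨a, (b + 1 - a).toNat, fun i hi => ⟨ha hi, by have := hb hi; omega⟩⟩

end Window

section WindowMeasure

open Finset

variable {q : ℕ} {μ : Measure (Config q)}

theorem measurableSet_window (s : ℤ) (w : List (Fin q)) : MeasurableSet (window s w) := by
  have : window s w = ⋂ (i : ℕ) (hi : i < w.length), {x : Config q | x (s + i) = w[i]} := by
    ext x; simp [window]
  rw [this]
  exact .iInter fun i => .iInter fun _ => measurableSet_eq_fun (measurable_pi_apply _)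
    measurable_const

theorem sum_measure_inter_preimage_singleton {Ω β : Type*} [MeasurableSpace Ω] {ν : Measure Ω}
    [Fintype β] {g : Ω → β} (hg : ∀ b, MeasurableSet (g ⁻¹' {b})) (A : Set Ω) :
    ∑ b, ν (A ∩ g ⁻¹' {b}) = ν A := by
  have := sum_measure_preimage_singleton (μ := ν.restrict A) univ fun b _ => hg b
  simpa [Measure.restrict_apply (hg _), Set.inter_comm] using this

theorem sum_measure_inter_coord (A : Set (Config q)) (i : ℤ) :
    ∑ c, μ (A ∩ {x | x i = c}) = μ A :=
  sum_measure_inter_preimage_singleton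
    (fun _ => measurable_pi_apply i (measurableSet_singleton _)) A

theorem sum_measure_inter_window (A : Set (Config q)) (s : ℤ) (n : ℕ) :
    ∑ f : Fin n → Fin q, μ (A ∩ window s (List.ofFn f)) = μ A := by
  have hwin : ∀ f : Fin n → Fin q,
      window s (List.ofFn f) = (fun x : Config q => fun i : Fin n => x (s + i)) ⁻¹' {f} := by
    intro f; ext x; simp [mem_window_ofFn, funext_iff]
  simp only [hwin]
  exact sum_measure_inter_preimage_singleton (fun f => hwin f ▸ measurableSet_window _ _) A

theorem inter_window_eq_or {s : ℤ} {w : List (Fin q)} {A : Set (Config q)}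
    (hA : DependsOn (· ∈ A) (Set.Ico s (s + w.length))) :
    A ∩ window s w = window s w ∨ A ∩ window s w = ∅ :=
  (window_subset_or_disjoint hA).imp Set.inter_eq_right.mpr
    fun h => Set.disjoint_iff_inter_eq_empty.mp h.symm

variable [IsFiniteMeasure μ]

theorem ext_of_measure_window {ν : Measure (Config q)}
    (h : ∀ s w, μ (window s w) = ν (window s w)) : μ = ν := by
  refine ext_of_generate_finite _ generateFrom_measurableCylinders.symm
    isPiSystem_measurableCylinders (fun C hC => ?_) (by simpa using h 0 [])
  obtain ⟨I, S, -, rfl⟩ := (mem_measurableCylinders C).mp hC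
  obtain ⟨s, n, hI⟩ := exists_Ico_superset I
  rw [← sum_measure_inter_window _ s n, ← sum_measure_inter_window _ s n]
  refine sum_congr rfl fun f _ => ?_
  have hdep : DependsOn (· ∈ cylinder (α := fun _ : ℤ => Fin q) I S)
      (Set.Ico s (s + (List.ofFn f).length)) := by
    refine DependsOn.mono (by simpa using hI) fun x y hxy => ?_
    simp only [mem_cylinder, (dependsOn_restrict I) hxy]
  rcases inter_window_eq_or hdep with h' | h' <;> simp [h', h]

end WindowMeasure

section Criteria

open Finset

variable {q : ℕ} {μ : Measure (Config q)}

theorem isStationary'_of_measure_window [IsFiniteMeasure μ]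
    (h : ∀ s w, μ (window (s + 1) w) = μ (window s w)) : IsStationary' μ := by
  have hshift : Measurable (shift (q := q)) :=
    measurable_pi_lambda _ fun n => measurable_pi_apply (n + 1)
  refine ext_of_measure_window fun s w => ?_
  rw [Measure.map_apply hshift (measurableSet_window s w), preimage_shift_window, h]

theorem isColoring_of_measure_window (h : ∀ s c, μ (window s [c, c]) = 0) : IsColoring μ := by
  rw [IsColoring, ae_iff]
  refine measure_mono_null (fun x hx => ?_) (measure_iUnion_null fun s =>
    measure_iUnion_null fun c => h s c)
  obtain ⟨s, hs⟩ : ∃ s, x s = x (s + 1) := by simpa using hx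
  simp only [Set.mem_iUnion]
  exact ⟨s, x s, by simp [window_cons, hs]⟩

variable {k : ℕ}
  (hwin : ∀ (s t : ℤ) (u v : List (Fin q)), s + u.length + k ≤ t →
    μ (window s u ∩ window t v) = μ (window s u) * μ (window t v))
include hwin

theorem measure_inter_of_dependsOn_Ico {A B : Set (Config q)} {s t : ℤ} {m n : ℕ}
    (hA : DependsOn (· ∈ A) (Set.Ico s (s + m))) (hB : DependsOn (· ∈ B) (Set.Ico t (t + n)))
    (hst : s + m + k ≤ t) : μ (A ∩ B) = μ A * μ B := by
  have hprod : ∀ (f : Fin m → Fin q) (g : Fin n → Fin q),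
      μ ((A ∩ window s (List.ofFn f)) ∩ (B ∩ window t (List.ofFn g))) =
        μ (A ∩ window s (List.ofFn f)) * μ (B ∩ window t (List.ofFn g)) := by
    intro f g
    rcases inter_window_eq_or (w := List.ofFn f) (by simpa using hA) with hf | hf <;>
    rcases inter_window_eq_or (w := List.ofFn g) (by simpa using hB) with hg | hg <;>
    simp [hf, hg, hwin, hst]
  calc μ (A ∩ B)
      = ∑ f : Fin m → Fin q, ∑ g : Fin n → Fin q,
          μ ((A ∩ window s (List.ofFn f)) ∩ (B ∩ window t (List.ofFn g))) := by
        rw [← sum_measure_inter_window _ s m]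
        refine sum_congr rfl fun f _ => ?_
        rw [← sum_measure_inter_window _ t n]
        congr! 2 with g
        ac_rfl
    _ = μ A * μ B := by
        simp only [hprod, ← sum_mul_sum, sum_measure_inter_window]

theorem measure_pi_union_of_lt {S T : Finset ℤ} {e : ℤ} (hS : ∀ a ∈ S, a < e)
    (hT : ∀ b ∈ T, e + k ≤ b) (t : ℤ → Set (Fin q)) :
    μ ((↑(S ∪ T) : Set ℤ).pi t) = μ ((S : Set ℤ).pi t) * μ ((T : Set ℤ).pi t) := by
  obtain ⟨a, ha⟩ := (insert e S).bddBelow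
  obtain ⟨b, hb⟩ := T.bddAbove
  have hdep : ∀ (R : Finset ℤ) (I : Set ℤ), (R : Set ℤ) ⊆ I →
      DependsOn (· ∈ (R : Set ℤ).pi t) I := fun R I hRI x y hxy => by
    simp only [Set.mem_pi, eq_iff_iff]
    exact forall₂_congr fun i hi => by rw [hxy i (hRI hi)]
  rw [coe_union, Set.union_pi]
  refine measure_inter_of_dependsOn_Ico hwin (s := a) (t := e + k) (m := (e - a).toNat)
    (n := (b + 1 - (e + k)).toNat) (hdep S _ fun i hi => ?_) (hdep T _ fun i hi => ?_) ?_
  · have := ha (mem_insert_of_mem hi); have := hS i hi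
    simp only [Set.mem_Ico]; omega
  · have := hb hi; have := hT i hi
    simp only [Set.mem_Ico]; omega
  · have := ha (mem_insert_self e S); omega

theorem measure_pi_union (t : ℤ → Set (Fin q)) (S T : Finset ℤ)
    (hsep : ∀ a ∈ S, ∀ b ∈ T, (k : ℤ) < |a - b|) :
    μ ((↑(S ∪ T) : Set ℤ).pi t) = μ ((S : Set ℤ).pi t) * μ ((T : Set ℤ).pi t) := by
  induction hn : S.card + T.card using Nat.strong_induction_on generalizing S T with
  | _ n ih =>
  rcases S.eq_empty_or_nonempty with rfl | hS
  · obtain ⟨b, hb⟩ := T.bddBelow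
    exact measure_pi_union_of_lt hwin (e := b - k) (by simp)
      (fun i hi => by have := hb hi; omega) t
  rcases T.eq_empty_or_nonempty with rfl | hT
  · obtain ⟨a, ha⟩ := S.bddAbove
    exact measure_pi_union_of_lt hwin (e := a + 1) (fun i hi => by have := ha hi; omega)
      (by simp) t
  have hne : S.max' hS ≠ T.max' hT := fun h => by
    have := hsep _ (S.max'_mem hS) _ (T.max'_mem hT)
    simp [h] at this
    omega
  wlog hlt : S.max' hS < T.max' hT generalizing S T
  · rw [union_comm, mul_comm]
    exact this T S (fun b hb a ha => abs_sub_comm a b ▸ hsep a ha b hb) (by omega) hT hS hne.symm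
      (hne.symm.lt_of_le (not_lt.mp hlt))
  -- `T` splits at `M = max S` into parts far to the left and far to the right of `M`.
  set M := S.max' hS
  have hfar : ∀ b ∈ T, b + k < M ∨ M + k < b := fun b hb => by
    have := hsep M (S.max'_mem hS) b hb
    rcases abs_cases (M - b) with ⟨h, -⟩ | ⟨h, -⟩ <;> omega
  have hleft : ∀ a ∈ S ∪ T.filter (· < M), a < M + 1 := fun a ha => by
    rcases mem_union.mp ha with ha | ha
    · exact Int.lt_add_one_iff.mpr (S.le_max' a ha)
    · exact (mem_filter.mp ha).2.trans (lt_add_one M)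
  have hright : ∀ b ∈ T.filter (¬ · < M), M + 1 + k ≤ b := fun b hb => by
    obtain ⟨hb, hMb⟩ := mem_filter.mp hb
    rcases hfar b hb with h | h <;> omega
  have hcard : S.card + (T.filter (· < M)).card < n := by
    refine hn ▸ Nat.add_lt_add_left (card_lt_card ⟨filter_subset _ _, fun h => ?_⟩) _
    exact (lt_irrefl M) (hlt.trans (mem_filter.mp (h (T.max'_mem hT))).2)
  rw [← filter_union_filter_not_eq (· < M) T, ← union_assoc,
    measure_pi_union_of_lt hwin hleft hright,
    measure_pi_union_of_lt hwin (fun a ha => hleft a (mem_union_right S ha)) hright,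
    ih _ hcard S _ (fun a ha b hb => hsep a ha b (filter_subset _ _ hb)) rfl, mul_assoc]

end Criteria

section KDependence

open Finset

variable {q : ℕ}

theorem exists_pi_eq_of_mem_piiUnionInter {A : Set ℤ} {s : Set (Config q)}
    (hs : s ∈ piiUnionInter (fun a => {s | MeasurableSet[MeasurableSpace.comap
      (fun x : Config q => x a) inferInstance] s}) A) :
    ∃ S : Finset ℤ, ↑S ⊆ A ∧ ∃ t : ℤ → Set (Fin q), s = (S : Set ℤ).pi t := by
  obtain ⟨S, hSA, f, hf, rfl⟩ := hs
  choose! t ht using fun a (ha : a ∈ S) => MeasurableSpace.measurableSet_comap.mp (hf a ha)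
  refine ⟨S, hSA, t, ?_⟩
  ext x
  simp +contextual [Set.mem_pi, ← (ht _ _).2]

variable {μ : Measure (Config q)} [IsZeroOrProbabilityMeasure μ] {k : ℕ}

theorem kDependent_of_measure_window_inter
    (hwin : ∀ (s t : ℤ) (u v : List (Fin q)), s + u.length + k ≤ t →
      μ (window s u ∩ window t v) = μ (window s u) * μ (window t v)) :
    KDependent k μ := by
  intro A B hAB
  have hle : ∀ A, coordSigma q A ≤ MeasurableSpace.pi := fun A =>
    iSup₂_le fun a _ => (measurable_pi_apply a).comap_le
  have hpi := isPiSystem_piiUnionInter (fun a => {s | MeasurableSet[MeasurableSpace.comap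
      (fun x : Config q => x a) inferInstance] s}) fun a =>
      @MeasurableSpace.isPiSystem_measurableSet _ (MeasurableSpace.comap _ inferInstance)
  refine IndepSets.indep (hle A) (hle B) (hpi A) (hpi B)
    (generateFrom_piiUnionInter_measurableSet _ A).symm
    (generateFrom_piiUnionInter_measurableSet _ B).symm ((IndepSets_iff _ _ _).mpr ?_)
  intro s₁ s₂ hs₁ hs₂
  obtain ⟨S, hSA, t₁, rfl⟩ := exists_pi_eq_of_mem_piiUnionInter hs₁
  obtain ⟨T, hTB, t₂, rfl⟩ := exists_pi_eq_of_mem_piiUnionInter hs₂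
  have hsep : ∀ a ∈ S, ∀ b ∈ T, (k : ℤ) < |a - b| := fun a ha b hb => hAB a (hSA ha) b (hTB hb)
  have hST : ∀ b ∈ T, b ∉ S := fun b hb hbS => by
    have := hsep b hbS b hb
    simp at this
    omega
  set t := fun i => if i ∈ S then t₁ i else t₂ i
  have h₁ : (S : Set ℤ).pi t₁ = (S : Set ℤ).pi t :=
    Set.pi_congr rfl fun i hi => by simp [t, mem_coe.mp hi]
  have h₂ : (T : Set ℤ).pi t₂ = (T : Set ℤ).pi t :=
    Set.pi_congr rfl fun i hi => by simp [t, hST i hi]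
  rw [h₁, h₂, ← Set.union_pi, ← coe_union, measure_pi_union hwin t S T hsep]

end KDependence

section WindowIndependence

open Finset

variable {q : ℕ} {μ : Measure (Config q)} {p : List (Fin q) → ℝ}

theorem measure_window_inter_window_of_sum_insert (hp : ∀ w, 0 ≤ p w)
    (hμ : ∀ s w, μ (window s w) = ENNReal.ofReal (p w))
    (hins : ∀ u v, ∑ c, p (u ++ c :: v) = p u * p v) (s t : ℤ) (u v : List (Fin q))
    (hst : s + u.length + 1 ≤ t) :
    μ (window s u ∩ window t v) = μ (window s u) * μ (window t v) := by
  obtain ⟨g, hg⟩ : ∃ g : ℕ, t = s + u.length + 1 + g :=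
    ⟨(t - (s + u.length + 1)).toNat, by omega⟩
  induction g generalizing u with
  | zero =>
    have hfill : ∀ c, window s u ∩ window t v ∩ {x | x (s + u.length) = c} =
        window s (u ++ c :: v) := fun c => by
      rw [window_append, window_cons, hg, Nat.cast_zero, add_zero]
      ext x
      simp only [Set.mem_inter_iff, Set.mem_ofPred_eq]
      tauto
    rw [← sum_measure_inter_coord _ (s + u.length), hμ, hμ, ← ENNReal.ofReal_mul (hp u),
      ← hins, ENNReal.ofReal_sum_of_nonneg fun c _ => hp _]
    simp only [hfill, hμ]
  | succ g ih =>
    rw [← sum_measure_inter_coord _ (s + u.length),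
      ← sum_measure_inter_coord (window s u) (s + u.length), sum_mul]
    refine sum_congr rfl fun c _ => ?_
    have := ih (u ++ [c]) (by simp; omega) (by simp; omega)
    rw [window_append_singleton] at this
    rw [← this, Set.inter_right_comm]

end WindowIndependence

section Select

open Finset

theorem Fin.sum_Iio_succ {M : Type*} [AddCommMonoid M] {n : ℕ} (a : Fin (n + 1) → M)
    (c : Fin n) : ∑ i ∈ Iio c.succ, a i = a 0 + ∑ i ∈ Iio c, a i.succ := by
  simp only [← filter_gt_eq_Iio, sum_filter, Fin.sum_univ_succ, Fin.succ_pos, if_true,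
    Fin.succ_lt_succ_iff]

theorem Fin.sum_Iio_add_le_sum {n : ℕ} {a : Fin n → ℝ} (ha : ∀ i, 0 ≤ a i) (c : Fin n) :
    ∑ i ∈ Iio c, a i + a c ≤ ∑ i, a i := by
  rw [add_comm, ← sum_insert (s := Iio c) (by simp)]
  exact sum_le_sum_of_subset_of_nonneg (subset_univ _) fun i _ _ => ha i

/-- Inverse-CDF sampling: for `0 ≤ s < ∑ i, a i`, the index `c` with
`∑ i < c, a i ≤ s < ∑ i ≤ c, a i`. -/
noncomputable def selectIndex : {q : ℕ} → (Fin (q + 1) → ℝ) → ℝ → Fin (q + 1)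
  | 0, _, _ => 0
  | _ + 1, a, s => if s < a 0 then 0 else (selectIndex (Fin.tail a) (s - a 0)).succ

theorem selectIndex_eq_iff {q : ℕ} {a : Fin (q + 1) → ℝ} (ha : ∀ i, 0 ≤ a i) {s : ℝ}
    (hs₀ : 0 ≤ s) (hs : s < ∑ i, a i) (c : Fin (q + 1)) :
    selectIndex a s = c ↔ ∑ i ∈ Iio c, a i ≤ s ∧ s < ∑ i ∈ Iio c, a i + a c := by
  induction q generalizing s with
  | zero =>
    obtain rfl := Fin.fin_one_eq_zero c
    simpa [selectIndex, hs₀, ← bot_eq_zero] using hs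
  | succ q ih =>
    rw [Fin.sum_univ_succ] at hs
    cases c using Fin.cases with
    | zero =>
      have h0 : Iio (0 : Fin (q + 2)) = ∅ := by simp [← bot_eq_zero]
      by_cases h : s < a 0 <;> simp [selectIndex, h, hs₀, h0]
    | succ d =>
      have hd : 0 ≤ ∑ i ∈ Iio d, a i.succ := sum_nonneg fun i _ => ha _
      by_cases h : s < a 0
      · simp only [selectIndex, h, if_true, Fin.sum_Iio_succ]
        exact iff_of_false (Fin.succ_ne_zero d).symm fun h' => by linarith [h'.1]
      · simp only [selectIndex, h, if_false, Fin.succ_inj, Fin.sum_Iio_succ]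
        rw [ih (a := Fin.tail a) (fun i => ha _) (by linarith)
          (by simp only [Fin.tail]; linarith)]
        simp only [Fin.tail]
        constructor <;> rintro ⟨h₁, h₂⟩ <;> constructor <;> linarith

theorem measurable_selectIndex {q : ℕ} (a : Fin (q + 1) → ℝ) : Measurable (selectIndex a) := by
  induction q with
  | zero => exact measurable_const
  | succ q ih =>
    exact Measurable.ite (measurableSet_lt measurable_id measurable_const) measurable_const
      ((Measurable.of_discrete (f := Fin.succ)).comp
        ((ih (Fin.tail a)).comp (measurable_id.sub_const (a 0))))

end Select

namespace SequentialSampling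

open Finset

variable {q : ℕ} (P : List (Fin (q + 1)) → ℝ)

/-- The words of length `n` label a partition of `[0, 1)` into intervals
`[leftEnd P w, leftEnd P w + P w)`, each split among the one-letter extensions of its word. -/
noncomputable def leftEnd (w : List (Fin (q + 1))) : ℝ :=
  w.reverseRecOn 0 fun w c t => t + ∑ i ∈ Iio c, P (w ++ [i])

@[simp]
theorem leftEnd_nil : leftEnd P [] = 0 := by
  simp [leftEnd]

theorem leftEnd_append_singleton (w : List (Fin (q + 1))) (c : Fin (q + 1)) :
    leftEnd P (w ++ [c]) = leftEnd P w + ∑ i ∈ Iio c, P (w ++ [i]) := by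
  simp only [leftEnd, List.reverseRecOn_concat]

noncomputable def pick (w : List (Fin (q + 1))) (x : ℝ) : Fin (q + 1) :=
  selectIndex (fun c => P (w ++ [c])) (x - leftEnd P w)

noncomputable def wordAt (x : ℝ) : ℕ → List (Fin (q + 1))
  | 0 => []
  | n + 1 => wordAt x n ++ [pick P (wordAt x n) x]

noncomputable def samplePath (x : ℝ) (n : ℕ) : Fin (q + 1) := pick P (wordAt P x n) x

theorem wordAt_eq_ofFn (x : ℝ) (n : ℕ) :
    wordAt P x n = List.ofFn fun i : Fin n => samplePath P x i := by
  induction n with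
  | zero => rfl
  | succ n ih =>
    simp only [List.ofFn_succ', List.concat_eq_append, Fin.val_castSucc, Fin.val_last, ← ih]
    rfl

theorem measurableSet_wordAt_eq (n : ℕ) (w : List (Fin (q + 1))) :
    MeasurableSet {x | wordAt P x n = w} := by
  induction n generalizing w with
  | zero => exact MeasurableSet.const ([] = w)
  | succ n ih =>
    have : {x | wordAt P x (n + 1) = w} =
        ⋃ v, {x | wordAt P x n = v} ∩ pick P v ⁻¹' {c | v ++ [c] = w} := by
      ext x; simp [wordAt]
    rw [this]
    exact .iUnion fun v => (ih v).inter <| (measurable_selectIndex _).comp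
      (measurable_id.sub_const _) MeasurableSet.of_discrete

theorem measurable_samplePath : Measurable (samplePath P) := by
  refine measurable_pi_lambda _ fun n => measurable_to_countable' fun c => ?_
  have : (fun x => samplePath P x n) ⁻¹' {c} = ⋃ v, {x | wordAt P x (n + 1) = v ++ [c]} := by
    ext x; simp [wordAt, samplePath]
  rw [this]
  exact .iUnion fun v => measurableSet_wordAt_eq P _ _

variable {P} (hP : ∀ w, 0 ≤ P w) (hnil : P [] = 1) (hsum : ∀ w, ∑ c, P (w ++ [c]) = P w)
include hP hnil hsum

theorem leftEnd_nonneg_and_add_le (w : List (Fin (q + 1))) :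
    0 ≤ leftEnd P w ∧ leftEnd P w + P w ≤ 1 := by
  induction w using List.reverseRecOn with
  | nil => simp [hnil]
  | append_singleton w c ih =>
    rw [leftEnd_append_singleton]
    have := Fin.sum_Iio_add_le_sum (fun i => hP (w ++ [i])) c
    have := sum_nonneg fun i (_ : i ∈ Iio c) => hP (w ++ [i])
    rw [hsum] at *
    constructor <;> linarith

theorem wordAt_eq_iff {x : ℝ} (hx : x ∈ Set.Ico (0 : ℝ) 1) (w : List (Fin (q + 1))) :
    wordAt P x w.length = w ↔ x ∈ Set.Ico (leftEnd P w) (leftEnd P w + P w) := by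
  induction w using List.reverseRecOn with
  | nil => simpa [wordAt, hnil] using hx
  | append_singleton w c ih =>
    have hstep : wordAt P x (w ++ [c]).length = w ++ [c] ↔
        wordAt P x w.length = w ∧ pick P w x = c := by
      rw [List.length_append, List.length_singleton, wordAt, List.append_singleton_inj]
      exact and_congr_right fun h => by rw [h]
    have hc := Fin.sum_Iio_add_le_sum (fun i => hP (w ++ [i])) c
    have hc₀ := sum_nonneg fun i (_ : i ∈ Iio c) => hP (w ++ [i])
    rw [hsum] at hc
    rw [hstep, ih, leftEnd_append_singleton, pick]
    simp only [Set.mem_Ico]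
    constructor
    · rintro ⟨⟨h₁, h₂⟩, h₃⟩
      rw [selectIndex_eq_iff (fun i => hP _) (by linarith) (by rw [hsum]; linarith)] at h₃
      constructor <;> linarith [h₃.1, h₃.2]
    · rintro ⟨h₁, h₂⟩
      refine ⟨⟨by linarith, by linarith⟩, ?_⟩
      rw [selectIndex_eq_iff (fun i => hP _) (by linarith) (by rw [hsum]; linarith)]
      constructor <;> linarith

theorem exists_measure_ofFn_eq :
    ∃ ν : Measure (ℕ → Fin (q + 1)), IsProbabilityMeasure ν ∧ ∀ w : List (Fin (q + 1)),
      ν {y | List.ofFn (fun i : Fin w.length => y i) = w} = ENNReal.ofReal (P w) := by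
  have : IsProbabilityMeasure (volume.restrict (Set.Ico (0 : ℝ) 1)) := ⟨by simp⟩
  refine ⟨(volume.restrict (Set.Ico 0 1)).map (samplePath P),
    Measure.isProbabilityMeasure_map (measurable_samplePath P).aemeasurable, fun w => ?_⟩
  have hpre : samplePath P ⁻¹' {y | List.ofFn (fun i : Fin w.length => y i) = w} =
      {x | wordAt P x w.length = w} := by
    ext x; simp [wordAt_eq_ofFn]
  have hI : {x | wordAt P x w.length = w} ∩ Set.Ico 0 1 =
      Set.Ico (leftEnd P w) (leftEnd P w + P w) := by
    obtain ⟨h₀, h₁⟩ := leftEnd_nonneg_and_add_le hP hnil hsum w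
    ext x
    constructor
    · rintro ⟨hw, hx⟩
      exact (wordAt_eq_iff hP hnil hsum hx w).mp hw
    · intro hx
      have hx' : x ∈ Set.Ico (0 : ℝ) 1 := ⟨by linarith [hx.1], by linarith [hx.2]⟩
      exact ⟨(wordAt_eq_iff hP hnil hsum hx' w).mpr hx, hx'⟩
  have hmeas :
      MeasurableSet {y : ℕ → Fin (q + 1) | List.ofFn (fun i : Fin w.length => y i) = w} :=
    (measurable_pi_lambda (fun (y : ℕ → Fin (q + 1)) (i : Fin w.length) => y i)
      fun i => measurable_pi_apply _)
      (MeasurableSet.of_discrete (s := {f | List.ofFn f = w}))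
  rw [Measure.map_apply (measurable_samplePath P) hmeas, hpre,
    Measure.restrict_apply (measurableSet_wordAt_eq P _ _), hI, Real.volume_Ico,
    add_sub_cancel_left]

end SequentialSampling

section Zigzag

/-- The position of `m` in the enumeration `0, -1, 1, -2, 2, …` of `ℤ`. -/
def zigzagIndex (m : ℤ) : ℕ := if 0 ≤ m then 2 * m.toNat else 2 * (-m).toNat - 1

/-- The first `N` sites of the enumeration form the window starting at `zigzagStart N`. -/
def zigzagStart (N : ℕ) : ℤ := -((N / 2 : ℕ) : ℤ)

variable {α : Type*}

/-- The word `w`, read in the order of the enumeration, rearranged into the order of `ℤ`. -/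
def zigzagOrder (w : List α) : List α :=
  w.reverseRecOn [] fun w c v => if w.length % 2 = 1 then c :: v else v ++ [c]

@[simp]
theorem zigzagOrder_nil : zigzagOrder ([] : List α) = [] := by
  simp [zigzagOrder]

theorem zigzagOrder_append_singleton (w : List α) (c : α) :
    zigzagOrder (w ++ [c]) =
      if w.length % 2 = 1 then c :: zigzagOrder w else zigzagOrder w ++ [c] := by
  simp only [zigzagOrder, List.reverseRecOn_concat]

@[simp]
theorem length_zigzagOrder (w : List α) : (zigzagOrder w).length = w.length := by
  induction w using List.reverseRecOn with
  | nil => simp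
  | append_singleton w c ih => rw [zigzagOrder_append_singleton]; split_ifs <;> simp [ih]

theorem exists_zigzagOrder_eq (v : List α) : ∃ w, zigzagOrder w = v := by
  induction hN : v.length generalizing v with
  | zero => exact ⟨[], by simp_all⟩
  | succ N ih =>
    by_cases hodd : N % 2 = 1
    · obtain ⟨c, v, rfl⟩ : ∃ c v', v = c :: v' := by
        cases v with
        | nil => simp at hN
        | cons c v => exact ⟨c, v, rfl⟩
      obtain ⟨w, rfl⟩ := ih v (by simpa using hN)
      refine ⟨w ++ [c], ?_⟩
      simp_all [zigzagOrder_append_singleton]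
    · obtain ⟨v, c, rfl⟩ : ∃ v' c, v = v' ++ [c] := by
        rcases v.eq_nil_or_concat with rfl | ⟨v, c, rfl⟩
        · simp at hN
        · exact ⟨v, c, by simp⟩
      obtain ⟨w, rfl⟩ := ih v (by simpa using hN)
      refine ⟨w ++ [c], ?_⟩
      simp_all [zigzagOrder_append_singleton]

theorem comp_zigzagIndex_mem_window_iff (y : ℕ → α) (N : ℕ) {w : List α}
    (hw : w.length = N) :
    y ∘ zigzagIndex ∈ window (zigzagStart N) (zigzagOrder w) ↔
      List.ofFn (fun i : Fin N => y i) = w := by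
  induction N generalizing w with
  | zero => simp_all
  | succ N ih =>
    obtain ⟨w, c, rfl⟩ : ∃ w' c, w = w' ++ [c] := by
      rcases w.eq_nil_or_concat with rfl | ⟨w, c, rfl⟩
      · simp at hw
      · exact ⟨w, c, by simp⟩
    have hw : w.length = N := by simpa using hw
    rw [List.ofFn_succ', List.concat_eq_append, List.append_singleton_inj,
      zigzagOrder_append_singleton, hw]
    simp only [Fin.val_castSucc, Fin.val_last]
    split_ifs with hodd
    · have hstart : zigzagStart (N + 1) = zigzagStart N - 1 := by unfold zigzagStart; omega
      have hindex : zigzagIndex (zigzagStart N - 1) = N := by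
        unfold zigzagIndex zigzagStart; split_ifs <;> omega
      rw [hstart, window_cons, sub_add_cancel, Set.mem_inter_iff, ih hw, Set.mem_ofPred_eq,
        Function.comp_apply, hindex, and_comm]
    · have hstart : zigzagStart (N + 1) = zigzagStart N := by unfold zigzagStart; omega
      have hindex : zigzagIndex (zigzagStart N + N) = N := by
        unfold zigzagIndex zigzagStart; split_ifs <;> omega
      rw [hstart, window_append_singleton, Set.mem_inter_iff, ih hw, Set.mem_ofPred_eq,
        Function.comp_apply, length_zigzagOrder, hw, hindex]

end Zigzag

section WindowWeights

open Finset

variable {q : ℕ} {μ : Measure (Config q)} {p : List (Fin q) → ℝ}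

theorem measure_window_eq_of_forall_append (hp : ∀ w, 0 ≤ p w)
    (hsnoc : ∀ w, ∑ c, p (w ++ [c]) = p w) (n : ℕ) {s : ℤ} {w : List (Fin q)}
    (h : ∀ v : List (Fin q), v.length = n →
      μ (window s (w ++ v)) = ENNReal.ofReal (p (w ++ v))) :
    μ (window s w) = ENNReal.ofReal (p w) := by
  induction n generalizing w with
  | zero => simpa using h [] rfl
  | succ n ih =>
    have hc : ∀ c, μ (window s (w ++ [c])) = ENNReal.ofReal (p (w ++ [c])) := fun c =>
      ih fun v hv => by simpa using h (c :: v) (by simp [hv])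
    rw [← sum_measure_inter_coord _ (s + w.length), ← hsnoc,
      ENNReal.ofReal_sum_of_nonneg fun c _ => hp _]
    simp only [← window_append_singleton, hc]

theorem measure_window_eq_of_forall_prepend (hp : ∀ w, 0 ≤ p w)
    (hcons : ∀ w, ∑ c, p (c :: w) = p w) (n : ℕ) {s : ℤ} {w : List (Fin q)}
    (h : ∀ v : List (Fin q), v.length = n →
      μ (window (s - n) (v ++ w)) = ENNReal.ofReal (p (v ++ w))) :
    μ (window s w) = ENNReal.ofReal (p w) := by
  induction n generalizing s w with
  | zero => simpa using h [] rfl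
  | succ n ih =>
    have hc : ∀ c, μ (window (s - 1) (c :: w)) = ENNReal.ofReal (p (c :: w)) := fun c =>
      ih fun v hv => by
        simpa [sub_sub, add_comm (1 : ℤ)] using h (v ++ [c]) (by simp [hv])
    rw [← sum_measure_inter_coord _ (s - 1), ← hcons,
      ENNReal.ofReal_sum_of_nonneg fun c _ => hp _]
    simp only [← hc, window_cons, sub_add_cancel, Set.inter_comm]

theorem exists_measure_window_eq {p : List (Fin (q + 1)) → ℝ} (hp : ∀ w, 0 ≤ p w)
    (hnil : p [] = 1) (hcons : ∀ w, ∑ c, p (c :: w) = p w)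
    (hsnoc : ∀ w, ∑ c, p (w ++ [c]) = p w) :
    ∃ μ : Measure (Config (q + 1)), IsProbabilityMeasure μ ∧
      ∀ s w, μ (window s w) = ENNReal.ofReal (p w) := by
  have hsum : ∀ w, ∑ c, p (zigzagOrder (w ++ [c])) = p (zigzagOrder w) := fun w => by
    simp only [zigzagOrder_append_singleton]
    split_ifs
    exacts [hcons _, hsnoc _]
  obtain ⟨ν, hν, hνw⟩ := SequentialSampling.exists_measure_ofFn_eq (fun w => hp _)
    (by simpa using hnil) hsum
  have hmeas : Measurable fun y : ℕ → Fin (q + 1) => y ∘ zigzagIndex :=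
    measurable_pi_lambda _ fun m => measurable_pi_apply _
  refine ⟨ν.map (· ∘ zigzagIndex), Measure.isProbabilityMeasure_map hmeas.aemeasurable,
    fun s w => ?_⟩
  have hstd : ∀ v : List (Fin (q + 1)), Measure.map (· ∘ zigzagIndex) ν
      (window (zigzagStart v.length) v) = ENNReal.ofReal (p v) := fun v => by
    obtain ⟨u, rfl⟩ := exists_zigzagOrder_eq v
    rw [Measure.map_apply hmeas (measurableSet_window _ _), length_zigzagOrder, ← hνw u]
    congr 1
    ext y
    exact comp_zigzagIndex_mem_window_iff y _ rfl
  -- Pad `w` on both sides to the window formed by the first `N` sites of the enumeration.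
  set N := 2 * (s.natAbs + w.length + 1)
  set j := (s - zigzagStart N).toNat
  have hj : s - j = zigzagStart N := by unfold j zigzagStart; omega
  refine measure_window_eq_of_forall_append hp hsnoc (N - j - w.length) fun v hv =>
    measure_window_eq_of_forall_prepend hp hcons j fun u hu => ?_
  have hlen : (u ++ (w ++ v)).length = N := by
    simp only [List.length_append, hu, hv]; unfold j zigzagStart; omega
  rw [hj, ← hlen, hstd]

end WindowWeights

/-- **Holroyd–Liggett**: there exists a stationary 1-dependent 4-coloring of `ℤ`. -/
theorem exists_stationary_one_dependent_four_coloring :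
    ∃ μ : Measure (Config 4),
      IsProbabilityMeasure μ ∧ IsStationary' μ ∧ KDependent 1 μ ∧ IsColoring μ := by
  have hcard : Fintype.card (Fin 4) = 4 := Fintype.card_fin 4
  obtain ⟨μ, hμ, hwin⟩ := exists_measure_window_eq (q := 3) HolroydLiggett.weight_nonneg
    HolroydLiggett.weight_nil (HolroydLiggett.sum_weight_cons hcard)
    (HolroydLiggett.sum_weight_append_singleton hcard)
  refine ⟨μ, hμ, isStationary'_of_measure_window fun s w => by rw [hwin, hwin], ?_, ?_⟩
  · exact kDependent_of_measure_window_inter <| measure_window_inter_window_of_sum_insert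
      HolroydLiggett.weight_nonneg hwin (HolroydLiggett.sum_weight_insert hcard)
  · exact isColoring_of_measure_window fun s c => by
      rw [hwin, HolroydLiggett.weight_pair_self, ENNReal.ofReal_zero]
end

section
/- There is no stationary 1-dependent 3-coloring of ℤ: no probability measure μ on ℤ → Fin 3 is simultaneously stationary, 1-dependent, and a 3-coloring. -/
/-!
Write `p w` for the probability that a configuration reads the word `w` on `0, …, |w| - 1`.
Stationarity gives Kolmogorov consistency on both sides, 1-dependence across a single site
gives `p u * p v = ∑ c, p (u ++ c :: v)`, and properness kills every word with two equal
adjacent letters.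
With three colours `a, b, e` these identities force `p [a] * p [e] = p [a, b, e]`,
`p [a, b] = p [b, a]`, `p [a] > 0` and `p [e, a] = p [a, b]`, hence the uniform values
`p [a] = 1/3`, `p [a, b] = 1/6`. But then `p [a, b, e, b, a] = p [a] * p [e, b, a] = 1/27`,
while it is at most `p [a, b] * p [b, a] = 1/36`.
-/

open MeasureTheory ProbabilityTheory

/-- A measure on configurations is stationary if it is invariant under the shift. -/
def IsShiftStationary {q : ℕ} (μ : Measure (Config q)) : Prop :=
  μ.map shift = μ

section Cylinder

variable {q : ℕ}

def wordCylinder : ℤ → List (Fin q) → Set (Config q)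
  | _, [] => Set.univ
  | n, c :: w => {x | x n = c} ∩ wordCylinder (n + 1) w

lemma wordCylinder_append (n : ℤ) (u v : List (Fin q)) :
    wordCylinder n (u ++ v) = wordCylinder n u ∩ wordCylinder (n + u.length) v := by
  induction u generalizing n with
  | nil => simp [wordCylinder]
  | cons c u ih =>
    simp only [List.cons_append, wordCylinder, ih, Set.inter_assoc, List.length_cons]
    push_cast
    ring_nf

lemma preimage_shift_wordCylinder (n : ℤ) (w : List (Fin q)) :
    shift ⁻¹' wordCylinder n w = wordCylinder (n + 1) w := by
  induction w generalizing n with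
  | nil => rfl
  | cons c w ih => simp only [wordCylinder, Set.preimage_inter, ih]; rfl

lemma comap_coord_le_coordSigma {A : Set ℤ} {a : ℤ} (ha : a ∈ A) :
    MeasurableSpace.comap (fun x : Config q => x a) inferInstance ≤ coordSigma q A :=
  le_iSup₂ (f := fun a (_ : a ∈ A) => MeasurableSpace.comap (fun x : Config q => x a) _) a ha

lemma coordSigma_le (A : Set ℤ) : coordSigma q A ≤ MeasurableSpace.pi :=
  iSup₂_le fun a _ => (measurable_pi_apply a).comap_le

lemma measurableSet_coordSigma_wordCylinder {A : Set ℤ} {n : ℤ} {w : List (Fin q)}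
    (hA : Set.Ico n (n + w.length) ⊆ A) : MeasurableSet[coordSigma q A] (wordCylinder n w) := by
  induction w generalizing n with
  | nil => exact MeasurableSet.univ
  | cons c w ih =>
    refine MeasurableSet.inter (comap_coord_le_coordSigma (hA ?_) _ ⟨{c}, trivial, rfl⟩)
      (ih fun m hm => hA ?_)
    · simp
    · simp only [Set.mem_Ico, List.length_cons] at hm ⊢
      push_cast
      omega

lemma measurableSet_wordCylinder (n : ℤ) (w : List (Fin q)) : MeasurableSet (wordCylinder n w) :=
  coordSigma_le Set.univ _ (measurableSet_coordSigma_wordCylinder (Set.subset_univ _))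

end Cylinder

section Measure

variable {q : ℕ} {μ : Measure (Config q)}

lemma measurable_shift : Measurable (shift : Config q → Config q) :=
  measurable_pi_lambda _ fun n => measurable_pi_apply (n + 1)

lemma IsShiftStationary.measure_wordCylinder (hstat : IsShiftStationary μ) (n : ℤ)
    (w : List (Fin q)) : μ (wordCylinder n w) = μ (wordCylinder 0 w) := by
  have step (m : ℤ) : μ (wordCylinder (m + 1) w) = μ (wordCylinder m w) := by
    rw [← preimage_shift_wordCylinder, ← Measure.map_apply measurable_shift
      (measurableSet_wordCylinder m w), hstat]
  induction n using Int.induction_on with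
  | zero => rfl
  | succ m ih => rw [step, ih]
  | pred m ih => rw [← ih, ← step, sub_add_cancel]

lemma KDependent.measure_wordCylinder_inter {k : ℕ} (hdep : KDependent k μ) (n : ℤ)
    (u v : List (Fin q)) :
    μ (wordCylinder n u ∩ wordCylinder (n + u.length + k) v) =
      μ (wordCylinder n u) * μ (wordCylinder (n + u.length + k) v) := by
  have hsep : ∀ a ∈ Set.Ico n (n + u.length), ∀ b ∈ Set.Ici (n + u.length + k),
      (k : ℤ) < |a - b| := by
    intro a ha b hb
    simp only [Set.mem_Ico, Set.mem_Ici] at ha hb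
    rw [abs_sub_comm]
    exact lt_of_lt_of_le (by omega) (le_abs_self _)
  exact (Indep_iff _ _ μ).1 (hdep _ _ hsep) _ _ (measurableSet_coordSigma_wordCylinder le_rfl)
    (measurableSet_coordSigma_wordCylinder fun m hm => hm.1)

lemma IsColoring.measure_wordCylinder_repeat (hcol : IsColoring μ) (n : ℤ) (u : List (Fin q))
    (c : Fin q) (v : List (Fin q)) : μ (wordCylinder n (u ++ c :: c :: v)) = 0 := by
  refine measure_mono_null (fun x hx => ?_) (ae_iff.1 hcol)
  simp only [wordCylinder_append, wordCylinder, Set.mem_inter_iff] at hx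
  exact fun h => h _ (hx.2.1.trans hx.2.2.1.symm)

lemma sum_measureReal_coord_inter [IsFiniteMeasure μ] (s : Set (Config q)) (m : ℤ) :
    ∑ c, μ.real ({x | x m = c} ∩ s) = μ.real s := by
  have h := sum_measureReal_preimage_singleton (μ := μ.restrict s) Finset.univ
    (f := fun x : Config q => x m) fun c _ => measurable_pi_apply m (measurableSet_singleton c)
  simp only [measureReal_restrict_apply (measurable_pi_apply m (measurableSet_singleton _)),
    Finset.coe_univ, Set.preimage_univ, measureReal_restrict_apply_univ] at h
  exact h

end Measure

structure IsOneDepColoringLaw {q : ℕ} (p : List (Fin q) → ℝ) : Prop where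
  nonneg : ∀ w, 0 ≤ p w
  nil : p [] = 1
  sum_append : ∀ w, ∑ c, p (w ++ [c]) = p w
  sum_cons : ∀ w, ∑ c, p (c :: w) = p w
  mul_eq_sum : ∀ u v, p u * p v = ∑ c, p (u ++ c :: v)
  repeat_eq_zero : ∀ u c v, p (u ++ c :: c :: v) = 0

section WordProb

variable {q : ℕ} {μ : Measure (Config q)}

noncomputable def wordProb (μ : Measure (Config q)) (w : List (Fin q)) : ℝ :=
  μ.real (wordCylinder 0 w)

lemma wordProb_nil [IsProbabilityMeasure μ] : wordProb μ [] = 1 := probReal_univ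

lemma sum_wordProb_append [IsFiniteMeasure μ] (w : List (Fin q)) :
    ∑ c, wordProb μ (w ++ [c]) = wordProb μ w := by
  simp only [wordProb, wordCylinder_append, wordCylinder, Set.inter_univ,
    Set.inter_comm (wordCylinder 0 w)]
  exact sum_measureReal_coord_inter _ _

lemma IsShiftStationary.sum_wordProb_cons [IsFiniteMeasure μ] (hstat : IsShiftStationary μ)
    (w : List (Fin q)) : ∑ c, wordProb μ (c :: w) = wordProb μ w := by
  rw [wordProb, measureReal_def, ← hstat.measure_wordCylinder 1, ← measureReal_def]
  exact sum_measureReal_coord_inter _ 0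

lemma IsShiftStationary.wordProb_mul [IsFiniteMeasure μ] (hstat : IsShiftStationary μ)
    (hdep : KDependent 1 μ) (u v : List (Fin q)) :
    wordProb μ u * wordProb μ v = ∑ c, wordProb μ (u ++ c :: v) := by
  have hsplit (c : Fin q) : wordCylinder 0 (u ++ c :: v) =
      {x | x (0 + u.length) = c} ∩ (wordCylinder 0 u ∩ wordCylinder (0 + u.length + 1) v) := by
    rw [wordCylinder_append, wordCylinder, Set.inter_left_comm]
  have hindep := hdep.measure_wordCylinder_inter 0 u v
  rw [Nat.cast_one] at hindep
  simp only [wordProb, hsplit]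
  rw [sum_measureReal_coord_inter]
  simp only [measureReal_def]
  rw [hindep, ENNReal.toReal_mul, hstat.measure_wordCylinder (0 + u.length + 1) v]

lemma IsColoring.wordProb_repeat (hcol : IsColoring μ) (u : List (Fin q)) (c : Fin q)
    (v : List (Fin q)) : wordProb μ (u ++ c :: c :: v) = 0 := by
  simp [wordProb, measureReal_def, hcol.measure_wordCylinder_repeat]

theorem isOneDepColoringLaw_wordProb [IsProbabilityMeasure μ] (hstat : IsShiftStationary μ)
    (hdep : KDependent 1 μ) (hcol : IsColoring μ) : IsOneDepColoringLaw (wordProb μ) where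
  nonneg _ := measureReal_nonneg
  nil := wordProb_nil
  sum_append := sum_wordProb_append
  sum_cons := hstat.sum_wordProb_cons
  mul_eq_sum := hstat.wordProb_mul hdep
  repeat_eq_zero := hcol.wordProb_repeat

end WordProb

lemma Fin.sum_univ_three_of_ne {M : Type*} [AddCommMonoid M] (f : Fin 3 → M) {a b e : Fin 3}
    (hab : a ≠ b) (hae : a ≠ e) (hbe : b ≠ e) : ∑ c, f c = f a + f b + f e := by
  fin_cases a <;> fin_cases b <;> fin_cases e <;> simp_all [Fin.sum_univ_three] <;> abel

namespace IsOneDepColoringLaw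

variable {q : ℕ} {p : List (Fin q) → ℝ}

lemma apply_append_singleton_le (hp : IsOneDepColoringLaw p) (w : List (Fin q)) (c : Fin q) :
    p (w ++ [c]) ≤ p w :=
  hp.sum_append w ▸ Finset.single_le_sum (f := fun c => p (w ++ [c]))
    (fun _ _ => hp.nonneg _) (Finset.mem_univ c)

lemma apply_cons_le (hp : IsOneDepColoringLaw p) (c : Fin q) (w : List (Fin q)) :
    p (c :: w) ≤ p w :=
  hp.sum_cons w ▸ Finset.single_le_sum (f := fun c => p (c :: w))
    (fun _ _ => hp.nonneg _) (Finset.mem_univ c)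

lemma apply_cons_cons_self (hp : IsOneDepColoringLaw p) (c : Fin q) (v : List (Fin q)) :
    p (c :: c :: v) = 0 :=
  hp.repeat_eq_zero [] c v

lemma apply_append_cons_cons_self (hp : IsOneDepColoringLaw p) (u : List (Fin q)) (a c : Fin q)
    (v : List (Fin q)) : p (u ++ a :: c :: c :: v) = 0 := by
  simpa using hp.repeat_eq_zero (u ++ [a]) c v

variable {p : List (Fin 3) → ℝ} {a b e : Fin 3}

lemma sum_singleton (hp : IsOneDepColoringLaw p) (hab : a ≠ b) (hae : a ≠ e)
    (hbe : b ≠ e) :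
    p [a] + p [b] + p [e] = 1 := by
  rw [← Fin.sum_univ_three_of_ne (fun c => p [c]) hab hae hbe, ← hp.nil]
  exact hp.sum_cons []

lemma apply_append_singleton_eq_add (hp : IsOneDepColoringLaw p) (u : List (Fin 3))
    (hab : a ≠ b) (hae : a ≠ e) (hbe : b ≠ e) :
    p (u ++ [a]) = p (u ++ [a, b]) + p (u ++ [a, e]) := by
  rw [← hp.sum_append, Fin.sum_univ_three_of_ne _ hab hae hbe]
  simp only [List.append_assoc, List.cons_append, List.nil_append]
  rw [hp.repeat_eq_zero u a [], zero_add]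

lemma apply_cons_eq_add (hp : IsOneDepColoringLaw p) (v : List (Fin 3))
    (hab : a ≠ b) (hae : a ≠ e) (hbe : b ≠ e) :
    p (a :: v) = p (b :: a :: v) + p (e :: a :: v) := by
  rw [← hp.sum_cons, Fin.sum_univ_three_of_ne _ hab hae hbe, hp.apply_cons_cons_self, zero_add]

lemma append_singleton_mul_cons_of_ne (hp : IsOneDepColoringLaw p) (u v : List (Fin 3))
    (hab : a ≠ b) (hae : a ≠ e) (hbe : b ≠ e) :
    p (u ++ [a]) * p (e :: v) = p (u ++ a :: b :: e :: v) := by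
  rw [hp.mul_eq_sum, Fin.sum_univ_three_of_ne _ hab hae hbe]
  simp only [List.append_assoc, List.cons_append, List.nil_append]
  rw [hp.repeat_eq_zero u a (e :: v), hp.apply_append_cons_cons_self, zero_add, add_zero]

lemma append_singleton_mul_cons_self (hp : IsOneDepColoringLaw p) (u v : List (Fin 3))
    (hab : a ≠ b) (hae : a ≠ e) (hbe : b ≠ e) :
    p (u ++ [a]) * p (a :: v) = p (u ++ a :: b :: a :: v) + p (u ++ a :: e :: a :: v) := by
  rw [hp.mul_eq_sum, Fin.sum_univ_three_of_ne _ hab hae hbe]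
  simp only [List.append_assoc, List.cons_append, List.nil_append]
  rw [hp.repeat_eq_zero u a (a :: v), zero_add]

lemma singleton_mul_singleton (hp : IsOneDepColoringLaw p) (hab : a ≠ b) (hae : a ≠ e)
    (hbe : b ≠ e) :
    p [a] * p [e] = p [a, b, e] := by
  simpa using hp.append_singleton_mul_cons_of_ne [] [] hab hae hbe

lemma pair_comm (hp : IsOneDepColoringLaw p) (hab : a ≠ b) (hae : a ≠ e)
    (hbe : b ≠ e) :
    p [a, b] = p [b, a] := by
  have h_ab : p [a, b] = p [a, b, a] + p [a, b, e] := by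
    simpa using hp.apply_append_singleton_eq_add [a] hab.symm hbe hae
  have h_ba : p [b, a] = p [a, b, a] + p [e, b, a] := hp.apply_cons_eq_add [a] hab.symm hbe hae
  rw [h_ab, h_ba, ← hp.singleton_mul_singleton hab hae hbe,
    ← hp.singleton_mul_singleton hbe.symm hae.symm hab.symm, mul_comm]

lemma singleton_le_add (hp : IsOneDepColoringLaw p) (hab : a ≠ b) (hae : a ≠ e)
    (hbe : b ≠ e) :
    p [a] ≤ p [b] + p [e] := by
  have := hp.apply_append_singleton_eq_add [] hab hae hbe
  simp only [List.nil_append] at this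
  linarith [hp.apply_cons_le a [b], hp.apply_cons_le a [e]]

lemma singleton_pos (hp : IsOneDepColoringLaw p) (hab : a ≠ b) (hae : a ≠ e)
    (hbe : b ≠ e) :
    0 < p [a] := by
  have hbe_le : p [b] * p [e] ≤ p [a] := calc
    p [b] * p [e] = p [b, a, e] := hp.singleton_mul_singleton hab.symm hbe hae
    _ ≤ p [b, a] := hp.apply_append_singleton_le [b, a] e
    _ ≤ p [a] := hp.apply_cons_le b [a]
  by_contra! ha
  -- `p [a] = 0` would force `p [b] = p [e] = 1/2`
  nlinarith [hp.sum_singleton hab hae hbe, hp.singleton_le_add hab.symm hbe hae,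
    hp.singleton_le_add hae.symm hbe.symm hab, hp.nonneg [a], hp.nonneg [b], hp.nonneg [e]]

lemma pair_eq_pair (hp : IsOneDepColoringLaw p) (hab : a ≠ b) (hae : a ≠ e)
    (hbe : b ≠ e) :
    p [e, a] = p [a, b] := by
  have h₁ : p [a] * p [e, a] = p [a, b, e, a] := by
    simpa using hp.append_singleton_mul_cons_of_ne [] [a] hab hae hbe
  have h₂ : p [a, b] * p [a] = p [a, b, e, a] := by
    simpa using hp.append_singleton_mul_cons_of_ne [a] [] hbe hab.symm hae.symm
  rw [mul_comm] at h₂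
  exact mul_left_cancel₀ (hp.singleton_pos hab hae hbe).ne' (h₁.trans h₂.symm)

lemma singleton_eq_two_mul_pair (hp : IsOneDepColoringLaw p) (hab : a ≠ b) (hae : a ≠ e)
    (hbe : b ≠ e) : p [a] = 2 * p [a, b] := by
  have h := hp.apply_append_singleton_eq_add [] hab hae hbe
  simp only [List.nil_append] at h
  rw [h, hp.pair_comm hae hab hbe.symm, hp.pair_eq_pair hab hae hbe, two_mul]

lemma pair_eq_one_sixth (hp : IsOneDepColoringLaw p) (hab : a ≠ b) (hae : a ≠ e)
    (hbe : b ≠ e) :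
    p [a, b] = 1 / 6 := by
  have hb : p [b] = 2 * p [a, b] := by
    rw [hp.singleton_eq_two_mul_pair hab.symm hbe hae, hp.pair_comm hab hae hbe]
  have he : p [e] = 2 * p [a, b] := by
    rw [hp.singleton_eq_two_mul_pair hae.symm hbe.symm hab, hp.pair_eq_pair hab hae hbe]
  linarith [hp.sum_singleton hab hae hbe, hp.singleton_eq_two_mul_pair hab hae hbe]

lemma singleton_eq_one_third (hp : IsOneDepColoringLaw p) (hab : a ≠ b) (hae : a ≠ e)
    (hbe : b ≠ e) : p [a] = 1 / 3 := by
  rw [hp.singleton_eq_two_mul_pair hab hae hbe, hp.pair_eq_one_sixth hab hae hbe]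
  norm_num

end IsOneDepColoringLaw

theorem not_isOneDepColoringLaw_fin_three (p : List (Fin 3) → ℝ) :
    ¬ IsOneDepColoringLaw p := by
  intro hp
  have h01 : (0 : Fin 3) ≠ 1 := by decide
  have h02 : (0 : Fin 3) ≠ 2 := by decide
  have h12 : (1 : Fin 3) ≠ 2 := by decide
  have h_left : p [0] * p [2, 1, 0] = p [0, 1, 2, 1, 0] := by
    simpa using hp.append_singleton_mul_cons_of_ne [] [1, 0] h01 h02 h12
  have h_right : p [0, 1] * p [1, 0] = p [0, 1, 0, 1, 0] + p [0, 1, 2, 1, 0] := by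
    simpa using hp.append_singleton_mul_cons_self [0] [0] h01.symm h12 h02
  have h210 : p [2, 1, 0] = 1 / 9 := by
    rw [← hp.singleton_mul_singleton h12.symm h02.symm h01.symm,
      hp.singleton_eq_one_third h02.symm h12.symm h01, hp.singleton_eq_one_third h01 h02 h12]
    norm_num
  rw [hp.singleton_eq_one_third h01 h02 h12, h210] at h_left
  rw [hp.pair_eq_one_sixth h01 h02 h12, hp.pair_eq_one_sixth h01.symm h12 h02] at h_right
  linarith [hp.nonneg [0, 1, 0, 1, 0]]

/-- There is no stationary 1-dependent 3-coloring of `ℤ`. -/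
theorem no_stationary_one_dependent_three_coloring (μ : Measure (Config 3))
    (hprob : IsProbabilityMeasure μ) (hstat : IsShiftStationary μ)
    (hdep : KDependent 1 μ) (hcol : IsColoring μ) : False :=
  not_isOneDepColoringLaw_fin_three _ (isOneDepColoringLaw_wordProb hstat hdep hcol)
end

section
/- No block factor of an i.i.d. sequence is a proper coloring of ℤ: for every q ≥ 1, every r ≥ 1, and every measurable function f : [0,1]^r → Fin q, if X_n = f(U_{n+1}, U_{n+2}, …, U_{n+r}) for n ∈ ℤ, then P(X_0 = X_1) > 0; in particular the process (X_n) is not almost surely a proper q-coloring. -/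
/-!
Suppose consecutive windows `g (init u)`, `g (tail u)` of an i.i.d. sequence `u` with law `ν`
almost never agree, where `g` is finite-valued. For a window `w`, let `L(w) = leftColors ν g w`
(resp. `R(w) = rightColors ν g w`) be the set of colours that `g` takes with positive
probability when `w` is extended by a fresh coordinate on the left (resp. right). Fubini makes
`L(w)` and `R(w)` disjoint for a.e. `w`, while a.s. `g v ∈ L (tail v) ∩ R (init v)`; hence
`L (init v) ≠ L (tail v)` a.s., so the finite-valued `L` is a factor of windows one shorter
with the same property. Windows of length zero give a constant `g`, a contradiction.
-/

open MeasureTheory ProbabilityTheory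

namespace BlockFactor

variable {α β : Type*} [MeasurableSpace α] [MeasurableSpace β]

@[fun_prop]
theorem measurable_finCons {n : ℕ} {f : β → α} {g : β → Fin n → α} (hf : Measurable f)
    (hg : Measurable g) : Measurable fun b => (Fin.cons (f b) (g b) : Fin (n + 1) → α) := by
  refine measurable_pi_lambda _ fun i => ?_
  induction i using Fin.cases with
  | zero => exact hf
  | succ j => exact (measurable_pi_apply j).comp hg

@[fun_prop]
theorem measurable_finSnoc {n : ℕ} {f : β → Fin n → α} {g : β → α} (hf : Measurable f)
    (hg : Measurable g) : Measurable fun b => (Fin.snoc (f b) (g b) : Fin (n + 1) → α) := by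
  refine measurable_pi_lambda _ fun i => ?_
  induction i using Fin.lastCases with
  | last => simpa only [Fin.snoc_last] using hg
  | cast j => simp only [Fin.snoc_castSucc]; exact (measurable_pi_apply j).comp hf

section

variable (ν : Measure α) [SigmaFinite ν]

theorem measurePreserving_tail_zero (n : ℕ) :
    MeasurePreserving (fun v : Fin (n + 1) → α => (Fin.tail v, v 0))
      (Measure.pi fun _ => ν) ((Measure.pi fun _ => ν).prod ν) := by
  convert (Measure.measurePreserving_swap (μ := ν) (ν := Measure.pi fun _ : Fin n => ν)).comp
    (measurePreserving_piFinSuccAbove (fun _ => ν) 0) using 1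
  funext v
  simp [MeasurableEquiv.piFinSuccAbove_apply]

theorem measurePreserving_init_last (n : ℕ) :
    MeasurePreserving (fun v : Fin (n + 1) → α => (Fin.init v, v (Fin.last n)))
      (Measure.pi fun _ => ν) ((Measure.pi fun _ => ν).prod ν) := by
  convert (Measure.measurePreserving_swap (μ := ν) (ν := Measure.pi fun _ : Fin n => ν)).comp
    (measurePreserving_piFinSuccAbove (fun _ => ν) (Fin.last n)) using 1
  funext v
  simp [MeasurableEquiv.piFinSuccAbove_apply]

theorem measurePreserving_middle_ends (n : ℕ) :
    MeasurePreserving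
      (fun u : Fin (n + 2) → α => (Fin.tail (Fin.init u), u 0, u (Fin.last (n + 1))))
      (Measure.pi fun _ => ν) ((Measure.pi fun _ => ν).prod (ν.prod ν)) :=
  (measurePreserving_prodAssoc _ ν ν).comp
    (((measurePreserving_tail_zero ν n).prod (.id ν)).comp (measurePreserving_init_last ν (n + 1)))

end

theorem ae_prod_measure_setOf_eq_ne_zero {C : Type*} [MeasurableSpace C]
    [Countable C] [MeasurableSingletonClass C] (μ : Measure β) (ν : Measure α) [SFinite ν]
    {h : β × α → C} (hh : Measurable h) :
    ∀ᵐ p ∂μ.prod ν, ν {x | h (p.1, x) = h p} ≠ 0 := by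
  have hlevel : Measurable fun p : β × C => ν {x | h (p.1, x) = p.2} :=
    measurable_from_prod_countable_left fun c =>
      measurable_measure_prodMk_left (hh (measurableSet_singleton c))
  have hnull : MeasurableSet {p : β × α | ν {x | h (p.1, x) = h p} = 0} :=
    (hlevel.comp (measurable_fst.prodMk hh)) (measurableSet_singleton 0)
  simp only [ae_iff, not_not]
  refine (Measure.measure_prod_null hnull).2 (.of_forall fun w => ?_)
  refine measure_mono_null (fun x hx => Set.mem_iUnion.2 ⟨⟨h (w, x), hx⟩, rfl⟩)
    (measure_iUnion_null fun c : {c // ν {x | h (w, x) = c} = 0} => c.2)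

section Colors

variable (ν : Measure α) {C : Type*} [MeasurableSpace C] {n : ℕ}

def leftColors (g : (Fin (n + 1) → α) → C) (w : Fin n → α) : Set C :=
  {c | ν {x | g (Fin.cons x w) = c} ≠ 0}

def rightColors (g : (Fin (n + 1) → α) → C) (w : Fin n → α) : Set C :=
  {c | ν {y | g (Fin.snoc w y) = c} ≠ 0}

variable {ν} {g : (Fin (n + 1) → α) → C}

theorem measurable_leftColors [SFinite ν] [MeasurableSingletonClass C] (hg : Measurable g) :
    Measurable (leftColors ν g) := by
  refine measurable_set_iff.2 fun c => ?_
  have hc : Measurable fun w : Fin n → α => ν {x | g (Fin.cons x w) = c} :=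
    measurable_measure_prodMk_left
      ((show Measurable fun p : (Fin n → α) × α => g (Fin.cons p.2 p.1) by fun_prop)
        (measurableSet_singleton c))
  exact measurableSet_setOfPred.1 (hc (measurableSet_singleton 0)).compl

variable [SigmaFinite ν] [Countable C] [MeasurableSingletonClass C]

theorem ae_mem_leftColors (hg : Measurable g) :
    ∀ᵐ v ∂Measure.pi fun _ => ν, g v ∈ leftColors ν g (Fin.tail v) := by
  have := ae_prod_measure_setOf_eq_ne_zero (Measure.pi fun _ : Fin n => ν) ν
    (h := fun p => g (Fin.cons p.2 p.1)) (by fun_prop)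
  filter_upwards [(measurePreserving_tail_zero ν n).quasiMeasurePreserving.ae this] with v hv
  rwa [Fin.cons_self_tail] at hv

theorem ae_mem_rightColors (hg : Measurable g) :
    ∀ᵐ v ∂Measure.pi fun _ => ν, g v ∈ rightColors ν g (Fin.init v) := by
  have := ae_prod_measure_setOf_eq_ne_zero (Measure.pi fun _ : Fin n => ν) ν
    (h := fun p => g (Fin.snoc p.1 p.2)) (by fun_prop)
  filter_upwards [(measurePreserving_init_last ν n).quasiMeasurePreserving.ae this] with v hv
  rwa [Fin.snoc_init_self] at hv

theorem ae_disjoint_leftColors_rightColors (hg : Measurable g)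
    (h0 : Measure.pi (fun _ => ν) {u : Fin (n + 2) → α | g (Fin.init u) = g (Fin.tail u)} = 0) :
    ∀ᵐ w ∂Measure.pi fun _ => ν, Disjoint (leftColors ν g w) (rightColors ν g w) := by
  set E := {q : (Fin n → α) × α × α | g (Fin.cons q.2.1 q.1) = g (Fin.snoc q.1 q.2.2)}
  have hE : MeasurableSet E := measurableSet_eq_fun (by fun_prop) (by fun_prop)
  have hE0 : ((Measure.pi fun _ => ν).prod (ν.prod ν)) E = 0 := by
    rw [← (measurePreserving_middle_ends ν n).measure_preimage hE.nullMeasurableSet, ← h0]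
    congr 1
    ext u
    have hinit : Fin.cons (u 0) (Fin.tail (Fin.init u)) = Fin.init u :=
      Fin.cons_self_tail (Fin.init u)
    have htail : Fin.snoc (Fin.tail (Fin.init u)) (u (Fin.last _)) = Fin.tail u := by
      rw [Fin.tail_init_eq_init_tail]
      exact Fin.snoc_init_self _
    simp only [E, Set.mem_preimage, Set.mem_ofPred_eq, hinit, htail]
  filter_upwards [(Measure.measure_prod_null hE).1 hE0] with w hw
  refine Set.disjoint_left.2 fun c hL hR => mul_ne_zero hL hR ?_
  rw [← Measure.prod_prod]
  exact measure_mono_null (fun q hq => hq.1.trans hq.2.symm) hw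

end Colors

theorem measure_pi_init_eq_tail_pos (ν : Measure α) [SigmaFinite ν] [NeZero ν] (n : ℕ)
    {C : Type*} [MeasurableSpace C] [Finite C] [MeasurableSingletonClass C]
    (g : (Fin n → α) → C) (hg : Measurable g) :
    0 < Measure.pi (fun _ => ν) {u : Fin (n + 1) → α | g (Fin.init u) = g (Fin.tail u)} := by
  induction n generalizing C with
  | zero =>
    have hall : {u : Fin 1 → α | g (Fin.init u) = g (Fin.tail u)} = Set.univ :=
      Set.eq_univ_of_forall fun u => congrArg g (Subsingleton.elim _ _)
    simpa [hall, Measure.pi_univ] using NeZero.ne ν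
  | succ n ih =>
    refine (pos_iff_ne_zero.2 fun h0 => (ih (leftColors ν g) (measurable_leftColors hg)).ne' ?_)
    have hdisj := (Measure.quasiMeasurePreserving_fst.comp
      (measurePreserving_init_last ν n).quasiMeasurePreserving).ae
      (ae_disjoint_leftColors_rightColors hg h0)
    have hne : ∀ᵐ v ∂Measure.pi fun _ => ν,
        leftColors ν g (Fin.init v) ≠ leftColors ν g (Fin.tail v) := by
      filter_upwards [ae_mem_leftColors hg, ae_mem_rightColors hg, hdisj] with v hL hR hD heq
      exact Set.disjoint_right.1 hD hR (heq ▸ hL)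
    simpa using ae_iff.1 hne

end BlockFactor

theorem ProbabilityTheory.iIndepFun.map_fun_precomp_eq_pi {Ω ι ι' α : Type*}
    [MeasurableSpace Ω] [MeasurableSpace α] [Fintype ι'] {P : Measure Ω} {U : ι → Ω → α}
    (hU : ∀ i, AEMeasurable (U i) P) (hind : iIndepFun U P) {ν : Measure α} [SigmaFinite ν] (hlaw : ∀ i, P.map (U i) = ν)
    {φ : ι' → ι} (hφ : φ.Injective) :
    P.map (fun ω j => U (φ j) ω) = Measure.pi fun _ => ν := by
  rw [(hind.precomp hφ).map_fun_eq_pi_map fun j => hU (φ j)]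
  simp only [hlaw]

open BlockFactor in
theorem block_factor_not_coloring_general
    {Ω : Type*} [MeasurableSpace Ω] (P : Measure Ω) [IsProbabilityMeasure P]
    (q r : ℕ)
    (U : ℤ → Ω → ℝ) (hmeas : ∀ n, Measurable (U n))
    (hindep : iIndepFun U P)
    (hunif : ∀ n, P.map (U n) = volume.restrict (Set.Icc (0 : ℝ) 1))
    (f : (Fin r → ℝ) → Fin q) (hf : Measurable f)
    (X : ℤ → Ω → Fin q)
    (hX : ∀ n ω, X n ω = f fun i => U (n + 1 + (i : ℕ)) ω) :
    0 < P {ω | X 0 ω = X 1 ω} ∧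
      ¬ (∀ᵐ ω ∂P, ∀ n : ℤ, X n ω ≠ X (n + 1) ω) := by
  have : IsProbabilityMeasure (volume.restrict (Set.Icc (0 : ℝ) 1)) :=
    hunif 0 ▸ Measure.isProbabilityMeasure_map (hmeas 0).aemeasurable
  set W : Ω → Fin (r + 1) → ℝ := fun ω j => U (1 + (j : ℕ)) ω
  have hlaw : P.map W = Measure.pi fun _ => volume.restrict (Set.Icc (0 : ℝ) 1) :=
    hindep.map_fun_precomp_eq_pi (fun n => (hmeas n).aemeasurable) hunif
      (φ := fun j : Fin (r + 1) => 1 + (j : ℕ)) fun i j h => by simpa [Fin.ext_iff] using h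
  have hwindow : {ω | X 0 ω = X 1 ω} = W ⁻¹' {u | f (Fin.init u) = f (Fin.tail u)} := by
    ext ω
    have hinit : Fin.init (W ω) = fun i : Fin r => U (0 + 1 + (i : ℕ)) ω :=
      funext fun i => by simp [W, Fin.init]
    have htail : Fin.tail (W ω) = fun i : Fin r => U (1 + 1 + (i : ℕ)) ω :=
      funext fun i => by simp only [W, Fin.tail, Fin.val_succ]; push_cast; ring_nf
    simp only [hX, Set.mem_preimage, Set.mem_ofPred_eq, hinit, htail]
  have hpos : 0 < P {ω | X 0 ω = X 1 ω} := by
    have hW : Measurable W := measurable_pi_lambda _ fun j => hmeas _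
    have hs : MeasurableSet {u : Fin (r + 1) → ℝ | f (Fin.init u) = f (Fin.tail u)} :=
      measurableSet_eq_fun (hf.comp (measurable_pi_lambda _ fun _ => measurable_pi_apply _))
        (hf.comp (measurable_pi_lambda _ fun _ => measurable_pi_apply _))
    rw [hwindow, ← Measure.map_apply hW hs, hlaw]
    exact measure_pi_init_eq_tail_pos _ r f hf
  refine ⟨hpos, fun hproper => hpos.ne' (measure_mono_null ?_ (ae_iff.1 hproper))⟩
  exact fun ω h hall => hall 0 h

/-- **No block factor of an i.i.d. sequence is a proper coloring of `ℤ`.** If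
`(U_n)_{n ∈ ℤ}` are i.i.d. uniform on `[0,1]` and `X_n = f (U_{n+1}, …, U_{n+r})` for a
measurable `f`, then `P(X_0 = X_1) > 0`; in particular `(X_n)` is not almost surely a
proper `q`-coloring. -/
theorem block_factor_not_coloring
    {Ω : Type*} [MeasurableSpace Ω] (P : Measure Ω) [IsProbabilityMeasure P]
    (q r : ℕ) (hq : 1 ≤ q) (hr : 1 ≤ r)
    (U : ℤ → Ω → ℝ) (hmeas : ∀ n, Measurable (U n))
    (hindep : iIndepFun U P)
    (hunif : ∀ n, P.map (U n) = volume.restrict (Set.Icc (0 : ℝ) 1))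
    (f : (Fin r → ℝ) → Fin q) (hf : Measurable f)
    (X : ℤ → Ω → Fin q)
    (hX : ∀ n ω, X n ω = f fun i => U (n + 1 + (i : ℕ)) ω) :
    0 < P {ω | X 0 ω = X 1 ω} ∧
      ¬ (∀ᵐ ω ∂P, ∀ n : ℤ, X n ω ≠ X (n + 1) ω) :=
  block_factor_not_coloring_general P q r U hmeas hindep hunif f hf X hX
end

section
/- (Crandall–Liggett generation theorem.) Let X be a real Banach space and A ⊆ X × X an accretive operator with domain D = {x : ∃ y, (x,y) ∈ A}. Suppose there is λ₀ > 0 such that for every λ ∈ (0, λ₀) there exists a function J_λ : closure(D) → X satisfying: for every z ∈ closure(D) there exists y ∈ X with (J_λ z, y) ∈ A and J_λ z + λ·y = z (in particular J_λ z ∈ D ⊆ closure(D)). Then for every x ∈ closure(D) and every t ≥ 0, the iterates (J_{t/n})^n x (defined for all integers n > t/λ₀, with the convention (J_{t/n})^n x = x when t = 0) converge in X as n → ∞; denoting the limit by S(t)x, the family (S(t))_{t≥0} is a strongly continuous contraction semigroup on closure(D): S(0)x = x, S(t+s)x = S(t)(S(s)x), ‖S(t)x − S(t)x'‖ ≤ ‖x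 − x'‖ for all x, x' ∈ closure(D) and s,t ≥ 0, and t ↦ S(t)x is continuous on [0,∞) for each x ∈ closure(D). -/
/-!
For `x` in the domain, with `(x, y) ∈ A`, the discrete quantities `a(n, m) = ‖J_λⁿ x - J_μᵐ x‖`
(`μ ≤ λ`) satisfy, by accretivity, the scheme `a(n+1, m+1) ≤ (μ/λ) a(n, m) + (1 - μ/λ) a(n+1, m)`
with `a(n, 0) ≤ nλ‖y‖`, `a(0, m) ≤ mμ‖y‖`. Since `√` is concave, `‖y‖ √((nλ - mμ)² + nλ² + mμ²)`
is a supersolution of this scheme, hence bounds `a(n, m)`. Along any step sizes `λₖ → 0⁺` with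
`Nₖ λₖ → t` this bound tends to `0`, so all such iterates `J_{λₖ}^{Nₖ} x` have one common limit
`S(t)x`; nonexpansiveness of the resolvents extends this to `closure D` and passes to the limit.
Choosing step sizes `1/k` for both `t` and `s` gives `S(t+s) = S(t) S(s)`, and the same bound
shows that `t ↦ S(t)x` is `‖y‖`-Lipschitz, hence continuous after a uniform approximation.
-/

open Filter Set Topology

theorem LipschitzOnWith.iterate {α : Type*} [PseudoEMetricSpace α] {K : NNReal} {f : α → α}
    {s : Set α} (hf : LipschitzOnWith K f s) (hmaps : MapsTo f s s) :
    ∀ n : ℕ, LipschitzOnWith (K ^ n) f^[n] s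
  | 0 => by simpa using LipschitzWith.id.lipschitzOnWith
  | n + 1 => by
    rw [pow_succ, Function.iterate_succ]
    exact (LipschitzOnWith.iterate hf hmaps n).comp hf hmaps

theorem LipschitzOnWith.norm_iterate_sub_le {E : Type*} [SeminormedAddCommGroup E] {f : E → E}
    {s : Set E} (hf : LipschitzOnWith 1 f s) (hmaps : MapsTo f s s) {x : E} (hx : x ∈ s) :
    ∀ n : ℕ, ‖f^[n] x - x‖ ≤ n * ‖f x - x‖
  | 0 => by simp
  | n + 1 => by
    have hshift : ‖f^[n] (f x) - f^[n] x‖ ≤ ‖f x - x‖ := by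
      simpa [dist_eq_norm] using (hf.iterate hmaps n).dist_le_mul _ (hmaps hx) _ hx
    calc ‖f^[n + 1] x - x‖ ≤ ‖f^[n] (f x) - f^[n] x‖ + ‖f^[n] x - x‖ := by
          rw [Function.iterate_succ_apply]; exact norm_sub_le_norm_sub_add_norm_sub _ _ _
      _ ≤ ‖f x - x‖ + n * ‖f x - x‖ := add_le_add hshift (norm_iterate_sub_le hf hmaps hx n)
      _ = (n + 1 : ℕ) * ‖f x - x‖ := by push_cast; ring

def crandallLiggettBound (lam mu : ℝ) (n m : ℕ) : ℝ :=
  (n * lam - m * mu) ^ 2 + n * lam * lam + m * mu * mu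

theorem crandallLiggettBound_comm (lam mu : ℝ) (n m : ℕ) :
    crandallLiggettBound lam mu n m = crandallLiggettBound mu lam m n := by
  unfold crandallLiggettBound; ring

theorem crandallLiggettBound_nonneg {lam mu : ℝ} (hlam : 0 ≤ lam) (hmu : 0 ≤ mu) (n m : ℕ) :
    0 ≤ crandallLiggettBound lam mu n m := by
  unfold crandallLiggettBound; positivity

theorem sq_le_crandallLiggettBound_zero {lam mu : ℝ} (hlam : 0 ≤ lam) (n : ℕ) :
    (n * lam) ^ 2 ≤ crandallLiggettBound lam mu n 0 := by
  simp only [crandallLiggettBound]; push_cast; nlinarith [mul_nonneg (Nat.cast_nonneg n) hlam]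

/-- The bound loses `2μ²` on each step of the difference scheme it is compared with. -/
theorem crandallLiggettBound_step {lam mu : ℝ} (hlam : lam ≠ 0) (n m : ℕ) :
    mu / lam * crandallLiggettBound lam mu n m
      + (1 - mu / lam) * crandallLiggettBound lam mu (n + 1) m
      ≤ crandallLiggettBound lam mu (n + 1) (m + 1) := by
  have hc : mu / lam * lam = mu := div_mul_cancel₀ _ hlam
  simp only [crandallLiggettBound]
  push_cast
  linear_combination (-(2 * (n * lam - m * mu) + 2 * lam)) * hc + 2 * sq_nonneg mu

theorem tendsto_sqrt_crandallLiggettBound {ι : Type*} {l : Filter ι} {lam mu : ι → ℝ}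
    {N M : ι → ℕ} {s t : ℝ} (hlam : Tendsto lam l (𝓝 0)) (hmu : Tendsto mu l (𝓝 0))
    (hN : Tendsto (fun i => N i * lam i) l (𝓝 s)) (hM : Tendsto (fun i => M i * mu i) l (𝓝 t)) :
    Tendsto (fun i => √(crandallLiggettBound (lam i) (mu i) (N i) (M i))) l (𝓝 |s - t|) := by
  simpa [crandallLiggettBound, Real.sqrt_sq_eq_abs] using
    ((((hN.sub hM).pow 2).add (hN.mul hlam)).add (hM.mul hmu)).sqrt

theorem tendsto_natCast_inv_nhdsGT_zero : Tendsto (fun k : ℕ => (k : ℝ)⁻¹) atTop (𝓝[>] 0) :=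
  tendsto_inv_atTop_nhdsGT_zero.comp tendsto_natCast_atTop_atTop

theorem tendsto_natCeil_mul_mul_inv {t : ℝ} (ht : 0 ≤ t) :
    Tendsto (fun k : ℕ => (⌈t * k⌉₊ : ℝ) * (k : ℝ)⁻¹) atTop (𝓝 t) := by
  simpa [Function.comp_def, div_eq_mul_inv] using
    (tendsto_nat_ceil_mul_div_atTop ht).comp tendsto_natCast_atTop_atTop

section

variable {X : Type*} [NormedAddCommGroup X] [NormedSpace ℝ X]

def Accretive (A : Set (X × X)) : Prop :=
  ∀ p ∈ A, ∀ q ∈ A, ∀ lam : ℝ, 0 < lam → ‖p.1 - q.1‖ ≤ ‖p.1 - q.1 + lam • (p.2 - q.2)‖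

def opDomain (A : Set (X × X)) : Set X := {x | ∃ y, (x, y) ∈ A}

/-- `R` agrees on `C` with the resolvent `(I + λA)⁻¹`. -/
def IsResolventOn (A : Set (X × X)) (lam : ℝ) (R : X → X) (C : Set X) : Prop :=
  ∀ z ∈ C, ∃ y, (R z, y) ∈ A ∧ R z + lam • y = z

theorem IsResolventOn.mapsTo {A : Set (X × X)} {lam : ℝ} {R : X → X} {C : Set X}
    (hR : IsResolventOn A lam R C) (hC : opDomain A ⊆ C) : MapsTo R C C :=
  fun z hz => hC ((hR z hz).imp fun _ h => h.1)

namespace Accretive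

variable {A : Set (X × X)} {C : Set X} {lam mu : ℝ} {R Q : X → X} {x y : X}

theorem norm_resolvent_sub_resolvent_le (hA : Accretive A) (hR : IsResolventOn A lam R C)
    (hQ : IsResolventOn A mu Q C) (hmu : 0 < mu) (hmulam : mu ≤ lam) {ξ η : X} (hξ : ξ ∈ C)
    (hη : η ∈ C) :
    ‖R ξ - Q η‖ ≤ mu / lam * ‖ξ - η‖ + (1 - mu / lam) * ‖R ξ - η‖ := by
  have hlam : 0 < lam := hmu.trans_le hmulam
  obtain ⟨u, hu, hRu⟩ := hR ξ hξ
  obtain ⟨v, hv, hQv⟩ := hQ η hη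
  have hc : mu / lam * lam = mu := div_mul_cancel₀ _ hlam.ne'
  have hkey : R ξ - Q η + mu • (u - v) = (mu / lam) • (ξ - η) + (1 - mu / lam) • (R ξ - η) := by
    linear_combination (norm := module) (mu / lam) • hRu - hQv - hc • u
  calc ‖R ξ - Q η‖ ≤ ‖(mu / lam) • (ξ - η) + (1 - mu / lam) • (R ξ - η)‖ :=
        hkey ▸ hA _ hu _ hv mu hmu
    _ ≤ mu / lam * ‖ξ - η‖ + (1 - mu / lam) * ‖R ξ - η‖ := by
        refine (norm_add_le _ _).trans_eq ?_
        rw [norm_smul_of_nonneg (by positivity),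
          norm_smul_of_nonneg (sub_nonneg.2 (div_le_one_of_le₀ hmulam hlam.le))]

theorem lipschitzOnWith_resolvent (hA : Accretive A) (hR : IsResolventOn A lam R C)
    (hlam : 0 < lam) : LipschitzOnWith 1 R C :=
  LipschitzOnWith.mk_one fun ξ hξ η hη => by
    simpa [dist_eq_norm, div_self hlam.ne'] using
      hA.norm_resolvent_sub_resolvent_le hR hR hlam le_rfl hξ hη

theorem dist_iterate_resolvent_le (hA : Accretive A) (hC : opDomain A ⊆ C)
    (hR : IsResolventOn A lam R C) (hlam : 0 < lam) {a b : X} (ha : a ∈ C) (hb : b ∈ C)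
    (n : ℕ) : dist (R^[n] a) (R^[n] b) ≤ dist a b := by
  simpa using ((hA.lipschitzOnWith_resolvent hR hlam).iterate (hR.mapsTo hC) n).dist_le_mul
    a ha b hb

theorem norm_resolvent_sub_le (hA : Accretive A) (hR : IsResolventOn A lam R C)
    (hlam : 0 < lam) (hx : x ∈ C) (hxy : (x, y) ∈ A) : ‖R x - x‖ ≤ lam * ‖y‖ := by
  obtain ⟨u, hu, hRu⟩ := hR x hx
  have hkey : R x - x + lam • (u - y) = -(lam • y) := by
    linear_combination (norm := module) hRu
  calc ‖R x - x‖ ≤ ‖-(lam • y)‖ := hkey ▸ hA _ hu _ hxy lam hlam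
    _ = lam * ‖y‖ := by rw [norm_neg, norm_smul_of_nonneg hlam.le]

theorem norm_iterate_resolvent_sub_le (hA : Accretive A) (hC : opDomain A ⊆ C)
    (hR : IsResolventOn A lam R C) (hlam : 0 < lam) (hxy : (x, y) ∈ A) (n : ℕ) :
    ‖R^[n] x - x‖ ≤ ‖y‖ * (n * lam) := by
  have hx : x ∈ C := hC ⟨y, hxy⟩
  calc ‖R^[n] x - x‖ ≤ n * ‖R x - x‖ :=
        (hA.lipschitzOnWith_resolvent hR hlam).norm_iterate_sub_le (hR.mapsTo hC) hx n
    _ ≤ n * (lam * ‖y‖) := by gcongr; exact hA.norm_resolvent_sub_le hR hlam hx hxy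
    _ = ‖y‖ * (n * lam) := by ring

theorem norm_iterate_sub_iterate_le_of_le (hA : Accretive A) (hC : opDomain A ⊆ C)
    (hR : IsResolventOn A lam R C) (hQ : IsResolventOn A mu Q C) (hmu : 0 < mu)
    (hmulam : mu ≤ lam) (hxy : (x, y) ∈ A) (n m : ℕ) :
    ‖R^[n] x - Q^[m] x‖ ≤ ‖y‖ * √(crandallLiggettBound lam mu n m) := by
  have hlam : 0 < lam := hmu.trans_le hmulam
  have hx : x ∈ C := hC ⟨y, hxy⟩
  induction m generalizing n with
  | zero =>
    refine (hA.norm_iterate_resolvent_sub_le hC hR hlam hxy n).trans ?_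
    gcongr
    exact Real.le_sqrt_of_sq_le (sq_le_crandallLiggettBound_zero hlam.le n)
  | succ m ih =>
    cases n with
    | zero =>
      rw [norm_sub_rev, crandallLiggettBound_comm]
      refine (hA.norm_iterate_resolvent_sub_le hC hQ hmu hxy (m + 1)).trans ?_
      gcongr
      exact Real.le_sqrt_of_sq_le (sq_le_crandallLiggettBound_zero hmu.le _)
    | succ n =>
      have hB : ∀ n m, 0 ≤ crandallLiggettBound lam mu n m :=
        crandallLiggettBound_nonneg hlam.le hmu.le
      have hc : 0 ≤ mu / lam := by positivity
      have hc' : 0 ≤ 1 - mu / lam := sub_nonneg.2 (div_le_one_of_le₀ hmulam hlam.le)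
      calc ‖R^[n + 1] x - Q^[m + 1] x‖
          ≤ mu / lam * ‖R^[n] x - Q^[m] x‖ + (1 - mu / lam) * ‖R^[n + 1] x - Q^[m] x‖ := by
            rw [Function.iterate_succ_apply' R, Function.iterate_succ_apply' Q]
            exact hA.norm_resolvent_sub_resolvent_le hR hQ hmu hmulam
              ((hR.mapsTo hC).iterate n hx) ((hQ.mapsTo hC).iterate m hx)
        _ ≤ mu / lam * (‖y‖ * √(crandallLiggettBound lam mu n m))
            + (1 - mu / lam) * (‖y‖ * √(crandallLiggettBound lam mu (n + 1) m)) := by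
            gcongr
            exacts [ih n, ih (n + 1)]
        _ = ‖y‖ * (mu / lam * √(crandallLiggettBound lam mu n m)
            + (1 - mu / lam) * √(crandallLiggettBound lam mu (n + 1) m)) := by ring
        _ ≤ ‖y‖ * √(mu / lam * crandallLiggettBound lam mu n m
            + (1 - mu / lam) * crandallLiggettBound lam mu (n + 1) m) := by
            gcongr
            exact Real.strictConcaveOn_sqrt.concaveOn.2 (hB n m) (hB (n + 1) m) hc hc'
              (by ring)
        _ ≤ ‖y‖ * √(crandallLiggettBound lam mu (n + 1) (m + 1)) := by
            gcongr
            exact crandallLiggettBound_step hlam.ne' n m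

theorem norm_iterate_sub_iterate_le (hA : Accretive A) (hC : opDomain A ⊆ C)
    (hR : IsResolventOn A lam R C) (hQ : IsResolventOn A mu Q C) (hlam : 0 < lam) (hmu : 0 < mu)
    (hxy : (x, y) ∈ A) (n m : ℕ) :
    ‖R^[n] x - Q^[m] x‖ ≤ ‖y‖ * √(crandallLiggettBound lam mu n m) := by
  rcases le_total mu lam with h | h
  · exact hA.norm_iterate_sub_iterate_le_of_le hC hR hQ hmu h hxy n m
  · rw [norm_sub_rev, crandallLiggettBound_comm]
    exact hA.norm_iterate_sub_iterate_le_of_le hC hQ hR hlam h hxy m n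

end Accretive

/-- Any step sizes `λₖ → 0⁺` with `Nₖ λₖ → t` give the same limit
(`Accretive.tendsto_iterate_expSemigroup`); unlike `λₖ = t / k`, this choice also covers `t = 0`. -/
noncomputable def expSemigroup (J : ℝ → X → X) (t : ℝ) (x : X) : X :=
  limUnder atTop fun k : ℕ => (J (k : ℝ)⁻¹)^[⌈t * k⌉₊] x

omit [NormedSpace ℝ X] in
theorem expSemigroup_zero (J : ℝ → X → X) (x : X) : expSemigroup J 0 x = x := by
  simpa [expSemigroup] using (tendsto_const_nhds (x := x) (f := (atTop : Filter ℕ))).limUnder_eq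

section Resolvents

variable {A : Set (X × X)} {J : ℝ → X → X}
  (hJ : ∀ᶠ lam in 𝓝[>] 0, IsResolventOn A lam (J lam) (closure (opDomain A)))
include hJ

theorem eventually_isResolventOn {ι : Type*} {l : Filter ι} {lam : ι → ℝ}
    (hlam : Tendsto lam l (𝓝[>] 0)) :
    ∀ᶠ i in l, 0 < lam i ∧ IsResolventOn A (lam i) (J (lam i)) (closure (opDomain A)) :=
  hlam.eventually (eventually_mem_nhdsWithin.and hJ)

namespace Accretive

theorem tendsto_dist_iterate_iterate (hA : Accretive A) {x : X} (hx : x ∈ closure (opDomain A))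
    {ι : Type*} {l : Filter ι} {lam mu : ι → ℝ} {N M : ι → ℕ} {t : ℝ}
    (hlam : Tendsto lam l (𝓝[>] 0)) (hmu : Tendsto mu l (𝓝[>] 0))
    (hN : Tendsto (fun i => N i * lam i) l (𝓝 t)) (hM : Tendsto (fun i => M i * mu i) l (𝓝 t)) :
    Tendsto (fun i => dist ((J (lam i))^[N i] x) ((J (mu i))^[M i] x)) l (𝓝 0) := by
  have hbound := tendsto_sqrt_crandallLiggettBound (tendsto_nhds_of_tendsto_nhdsWithin hlam)
    (tendsto_nhds_of_tendsto_nhdsWithin hmu) hN hM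
  rw [sub_self, abs_zero] at hbound
  rw [Metric.tendsto_nhds]
  intro ε hε
  obtain ⟨x', ⟨y', hxy'⟩, hxx'⟩ := Metric.mem_closure_iff.1 hx (ε / 3) (by positivity)
  have hsmall := (mul_zero ‖y'‖ ▸ hbound.const_mul ‖y'‖).eventually_lt_const
    (show (0 : ℝ) < ε / 3 by positivity)
  filter_upwards [eventually_isResolventOn hJ hlam, eventually_isResolventOn hJ hmu, hsmall]
    with i ⟨hlam_pos, hR⟩ ⟨hmu_pos, hQ⟩ hi
  have hx' : x' ∈ closure (opDomain A) := subset_closure ⟨y', hxy'⟩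
  rw [Real.dist_0_eq_abs, abs_of_nonneg dist_nonneg]
  calc dist ((J (lam i))^[N i] x) ((J (mu i))^[M i] x)
      ≤ dist ((J (lam i))^[N i] x) ((J (lam i))^[N i] x')
        + dist ((J (lam i))^[N i] x') ((J (mu i))^[M i] x')
        + dist ((J (mu i))^[M i] x') ((J (mu i))^[M i] x) := dist_triangle4 _ _ _ _
    _ ≤ dist x x' + ‖y'‖ * √(crandallLiggettBound (lam i) (mu i) (N i) (M i)) + dist x' x := by
        gcongr
        · exact hA.dist_iterate_resolvent_le subset_closure hR hlam_pos hx hx' _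
        · rw [dist_eq_norm]
          exact hA.norm_iterate_sub_iterate_le subset_closure hR hQ hlam_pos hmu_pos hxy' _ _
        · exact hA.dist_iterate_resolvent_le subset_closure hQ hmu_pos hx' hx _
    _ < ε / 3 + ε / 3 + ε / 3 := by rw [dist_comm x' x]; gcongr
    _ = ε := by ring

variable [CompleteSpace X]

theorem tendsto_iterate_expSemigroup (hA : Accretive A) {x : X}
    (hx : x ∈ closure (opDomain A)) {t : ℝ} (ht : 0 ≤ t) {lam : ℕ → ℝ} {N : ℕ → ℕ}
    (hlam : Tendsto lam atTop (𝓝[>] 0)) (hN : Tendsto (fun k => N k * lam k) atTop (𝓝 t)) :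
    Tendsto (fun k => (J (lam k))^[N k] x) atTop (𝓝 (expSemigroup J t x)) := by
  have hcauchy : CauchySeq fun k : ℕ => (J (k : ℝ)⁻¹)^[⌈t * k⌉₊] x := by
    rw [cauchySeq_iff_tendsto_dist_atTop_0, ← prod_atTop_atTop_eq]
    exact hA.tendsto_dist_iterate_iterate hJ hx
      (tendsto_natCast_inv_nhdsGT_zero.comp tendsto_fst)
      (tendsto_natCast_inv_nhdsGT_zero.comp tendsto_snd)
      ((tendsto_natCeil_mul_mul_inv ht).comp tendsto_fst)
      ((tendsto_natCeil_mul_mul_inv ht).comp tendsto_snd)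
  exact (tendsto_nhds_limUnder (cauchySeq_tendsto_of_complete hcauchy)).congr_dist
    (hA.tendsto_dist_iterate_iterate hJ hx tendsto_natCast_inv_nhdsGT_zero hlam
      (tendsto_natCeil_mul_mul_inv ht) hN)

theorem tendsto_iterate_div_expSemigroup (hA : Accretive A) {x : X}
    (hx : x ∈ closure (opDomain A)) {t : ℝ} (ht : 0 < t) :
    Tendsto (fun n : ℕ => (J (t / n))^[n] x) atTop (𝓝 (expSemigroup J t x)) := by
  refine hA.tendsto_iterate_expSemigroup hJ hx ht.le (tendsto_nhdsWithin_iff.2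
    ⟨tendsto_const_div_atTop_nhds_zero_nat t, ?_⟩) (tendsto_const_nhds.congr' ?_)
  all_goals filter_upwards [eventually_ne_atTop 0] with n hn
  · exact div_pos ht (Nat.cast_pos.2 (Nat.pos_of_ne_zero hn))
  · field_simp

theorem expSemigroup_mem (hA : Accretive A) {x : X} (hx : x ∈ closure (opDomain A)) {t : ℝ}
    (ht : 0 ≤ t) : expSemigroup J t x ∈ closure (opDomain A) :=
  isClosed_closure.mem_of_tendsto (hA.tendsto_iterate_expSemigroup hJ hx ht
    tendsto_natCast_inv_nhdsGT_zero (tendsto_natCeil_mul_mul_inv ht)) <| by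
    filter_upwards [eventually_isResolventOn hJ tendsto_natCast_inv_nhdsGT_zero] with k hk
    exact (hk.2.mapsTo subset_closure).iterate _ hx

theorem dist_expSemigroup_le (hA : Accretive A) {x x' : X} (hx : x ∈ closure (opDomain A))
    (hx' : x' ∈ closure (opDomain A)) {t : ℝ} (ht : 0 ≤ t) :
    dist (expSemigroup J t x) (expSemigroup J t x') ≤ dist x x' :=
  le_of_tendsto
    ((hA.tendsto_iterate_expSemigroup hJ hx ht tendsto_natCast_inv_nhdsGT_zero
      (tendsto_natCeil_mul_mul_inv ht)).dist
    (hA.tendsto_iterate_expSemigroup hJ hx' ht tendsto_natCast_inv_nhdsGT_zero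
      (tendsto_natCeil_mul_mul_inv ht))) <| by
    filter_upwards [eventually_isResolventOn hJ tendsto_natCast_inv_nhdsGT_zero] with k hk
    exact hA.dist_iterate_resolvent_le subset_closure hk.2 hk.1 hx hx' _

theorem dist_expSemigroup_expSemigroup_le (hA : Accretive A) {x y : X} (hxy : (x, y) ∈ A)
    {s t : ℝ} (hs : 0 ≤ s) (ht : 0 ≤ t) :
    dist (expSemigroup J s x) (expSemigroup J t x) ≤ ‖y‖ * |s - t| := by
  have hx : x ∈ closure (opDomain A) := subset_closure ⟨y, hxy⟩
  have hinv := tendsto_natCast_inv_nhdsGT_zero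
  refine le_of_tendsto_of_tendsto
    ((hA.tendsto_iterate_expSemigroup hJ hx hs hinv (tendsto_natCeil_mul_mul_inv hs)).dist
      (hA.tendsto_iterate_expSemigroup hJ hx ht hinv (tendsto_natCeil_mul_mul_inv ht)))
    ((tendsto_sqrt_crandallLiggettBound (tendsto_nhds_of_tendsto_nhdsWithin hinv)
      (tendsto_nhds_of_tendsto_nhdsWithin hinv) (tendsto_natCeil_mul_mul_inv hs)
      (tendsto_natCeil_mul_mul_inv ht)).const_mul ‖y‖) ?_
  filter_upwards [eventually_isResolventOn hJ hinv] with k ⟨hk, hR⟩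
  rw [dist_eq_norm]
  exact hA.norm_iterate_sub_iterate_le subset_closure hR hR hk hk hxy _ _

theorem continuousOn_expSemigroup (hA : Accretive A) {x : X} (hx : x ∈ closure (opDomain A)) :
    ContinuousOn (fun t => expSemigroup J t x) (Ici 0) := by
  refine continuousOn_of_uniform_approx_of_continuousOn fun u hu => ?_
  obtain ⟨ε, hε, hεu⟩ := Metric.mem_uniformity_dist.1 hu
  obtain ⟨x', ⟨y', hxy'⟩, hxx'⟩ := Metric.mem_closure_iff.1 hx ε hε
  have hlip : LipschitzOnWith ‖y'‖₊ (fun t => expSemigroup J t x') (Ici 0) :=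
    LipschitzOnWith.of_dist_le_mul fun s hs t ht => by
      simpa [Real.dist_eq] using hA.dist_expSemigroup_expSemigroup_le hJ hxy' hs ht
  exact ⟨_, hlip.continuousOn, fun t ht => hεu ((hA.dist_expSemigroup_le hJ hx
    (subset_closure ⟨y', hxy'⟩) ht).trans_lt hxx')⟩

theorem expSemigroup_add (hA : Accretive A) {x : X} (hx : x ∈ closure (opDomain A)) {s t : ℝ}
    (hs : 0 ≤ s) (ht : 0 ≤ t) :
    expSemigroup J (t + s) x = expSemigroup J t (expSemigroup J s x) := by
  have hinv := tendsto_natCast_inv_nhdsGT_zero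
  have hsum := hA.tendsto_iterate_expSemigroup hJ hx (add_nonneg ht hs) hinv
    (N := fun k => ⌈t * k⌉₊ + ⌈s * k⌉₊) (by
      simpa [add_mul] using (tendsto_natCeil_mul_mul_inv ht).add (tendsto_natCeil_mul_mul_inv hs))
  have hinner := hA.tendsto_iterate_expSemigroup hJ hx hs hinv (tendsto_natCeil_mul_mul_inv hs)
  have houter := hA.tendsto_iterate_expSemigroup hJ (hA.expSemigroup_mem hJ hx hs) ht hinv
    (tendsto_natCeil_mul_mul_inv ht)
  refine tendsto_nhds_unique hsum (houter.congr_dist (squeeze_zero'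
    (.of_forall fun _ => dist_nonneg) ?_ (tendsto_iff_dist_tendsto_zero.1 hinner)))
  filter_upwards [eventually_isResolventOn hJ hinv] with k ⟨hk, hR⟩
  rw [Function.iterate_add_apply, dist_comm (_^[_] x)]
  exact hA.dist_iterate_resolvent_le subset_closure hR hk (hA.expSemigroup_mem hJ hx hs)
    ((hR.mapsTo subset_closure).iterate _ hx) _

end Accretive

end Resolvents

end

/-- **Crandall–Liggett generation theorem.** Let `A ⊆ X × X` be an accretive (possibly
multivalued) operator on a real Banach space `X` with domain `D`, and suppose that for
all sufficiently small `λ > 0` the resolvent `J_λ` is defined on all of `closure D`,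
i.e. for every `z ∈ closure D` there is `y` with `(J_λ z, y) ∈ A` and `J_λ z + λ•y = z`.
Then for every `x ∈ closure D` and `t ≥ 0` the exponential-formula iterates
`(J_{t/n})^n x` converge, and the limits `S(t)x` form a strongly continuous contraction
semigroup on `closure D`. -/
theorem crandall_liggett_generation
    {X : Type*} [NormedAddCommGroup X] [NormedSpace ℝ X] [CompleteSpace X]
    (A : Set (X × X))
    (hacc : ∀ p ∈ A, ∀ q ∈ A, ∀ lam : ℝ, 0 < lam →
      ‖p.1 - q.1‖ ≤ ‖p.1 - q.1 + lam • (p.2 - q.2)‖)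
    (D : Set X) (hD : D = {x | ∃ y : X, (x, y) ∈ A})
    (lam₀ : ℝ) (hlam₀ : 0 < lam₀)
    (J : ℝ → X → X)
    (hJ : ∀ lam : ℝ, 0 < lam → lam < lam₀ → ∀ z ∈ closure D,
      ∃ y : X, (J lam z, y) ∈ A ∧ J lam z + lam • y = z) :
    ∃ S : ℝ → X → X,
      (∀ x ∈ closure D, ∀ t : ℝ, 0 ≤ t →
        Tendsto (fun n : ℕ => if t = 0 then x else (J (t / (n : ℝ)))^[n] x)
          atTop (nhds (S t x))) ∧
      (∀ x ∈ closure D, ∀ t : ℝ, 0 ≤ t → S t x ∈ closure D) ∧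
      (∀ x ∈ closure D, S 0 x = x) ∧
      (∀ x ∈ closure D, ∀ s t : ℝ, 0 ≤ s → 0 ≤ t → S (t + s) x = S t (S s x)) ∧
      (∀ x ∈ closure D, ∀ x' ∈ closure D, ∀ t : ℝ, 0 ≤ t →
        ‖S t x - S t x'‖ ≤ ‖x - x'‖) ∧
      (∀ x ∈ closure D, ContinuousOn (fun t : ℝ => S t x) (Set.Ici 0)) := by
  subst hD
  have hA : Accretive A := hacc
  have hJ' : ∀ᶠ lam in 𝓝[>] 0, IsResolventOn A lam (J lam) (closure (opDomain A)) := by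
    filter_upwards [Ioo_mem_nhdsGT hlam₀] with lam hlam using hJ lam hlam.1 hlam.2
  refine ⟨expSemigroup J, fun x hx t ht => ?_, fun x hx t ht => hA.expSemigroup_mem hJ' hx ht,
    fun x _ => expSemigroup_zero J x, fun x hx s t hs ht => hA.expSemigroup_add hJ' hx hs ht,
    fun x hx x' hx' t ht => ?_, fun x hx => hA.continuousOn_expSemigroup hJ' hx⟩
  · rcases ht.eq_or_lt with rfl | ht
    · simp [expSemigroup_zero]
    · simpa [ht.ne'] using hA.tendsto_iterate_div_expSemigroup hJ' hx ht
  · simpa [dist_eq_norm] using hA.dist_expSemigroup_le hJ' hx hx' ht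
end
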